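/- arXiv:math/0510344 — 13 statements merged into one kernel-verified Lean document; each statement's English description precedes it below -/
import Mathlib

section
/- Let X be an ℝ-tree, o ∈ X, and let B ⊆ X be a nonempty subset. Then there exists a point x ∈ X such that the intersection ⋂_{b ∈ B} [o,b] equals the segment [o,x]. -/
/-!
The hypotheses make every geodesic from `x` to `y` parameterize `[x,y]`. Restricting the
geodesic from `o` to `b` shows that `[o,p] ⊆ [o,b]` for every `p ∈ [o,b]`, and that the points
of `[o,b]` are ordered along it by their distance to `o`. The intersection `I` of the segments
`[o,b]`, `b ∈ B`, is a closed subset of a compact segment and contains `o`, so it has a point `x`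
farthest from `o`. Then `[o,x] ⊆ I`, and every `p ∈ I` lies with `x` on a common segment
`[o,b₀]`, no farther from `o` than `x`, hence on `[o,x]`.
-/

/-- `γ : ℝ → X` restricted to `[0, dist x y]` is an isometric parameterization of a
geodesic segment from `x` to `y`. -/
def IsGeodesicMap {X : Type*} [MetricSpace X] (x y : X) (γ : ℝ → X) : Prop :=
  γ 0 = x ∧ γ (dist x y) = y ∧
    ∀ s ∈ Set.Icc (0:ℝ) (dist x y), ∀ t ∈ Set.Icc (0:ℝ) (dist x y),
      dist (γ s) (γ t) = |s - t|

open Set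

namespace IsGeodesicMap

variable {X : Type*} [MetricSpace X] {x y : X} {γ : ℝ → X}

lemma dist_eq (h : IsGeodesicMap x y γ) {t : ℝ} (ht : t ∈ Icc 0 (dist x y)) :
    dist x (γ t) = t := by
  obtain ⟨h0, -, hiso⟩ := h
  rw [← h0, hiso 0 ⟨le_rfl, dist_nonneg⟩ t ht, zero_sub, abs_neg, abs_of_nonneg ht.1]

lemma restrict (h : IsGeodesicMap x y γ) {t : ℝ} (ht : t ∈ Icc 0 (dist x y)) :
    IsGeodesicMap x (γ t) γ := by
  have hsub : Icc 0 (dist x (γ t)) ⊆ Icc 0 (dist x y) := by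
    rw [h.dist_eq ht]; exact Icc_subset_Icc_right ht.2
  exact ⟨h.1, by rw [h.dist_eq ht], fun s hs u hu => h.2.2 s (hsub hs) u (hsub hu)⟩

lemma lipschitzOnWith (h : IsGeodesicMap x y γ) :
    LipschitzOnWith 1 γ (Icc 0 (dist x y)) :=
  LipschitzOnWith.of_dist_le_mul fun s hs u hu => by
    rw [h.2.2 s hs u hu, NNReal.coe_one, one_mul, Real.dist_eq]

lemma isCompact_image (h : IsGeodesicMap x y γ) : IsCompact (γ '' Icc 0 (dist x y)) :=
  isCompact_Icc.image_of_continuousOn h.lipschitzOnWith.continuousOn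

end IsGeodesicMap

section Segments

variable {X : Type*} [MetricSpace X] {seg : X → X → Set X}

def IsGeodesicSegments (seg : X → X → Set X) : Prop :=
  ∀ (x y : X) (γ : ℝ → X), IsGeodesicMap x y γ → seg x y = γ '' Icc 0 (dist x y)

lemma IsGeodesicSegments.seg_apply_eq_image (hseg : IsGeodesicSegments seg) {x y : X}
    {γ : ℝ → X} (hγ : IsGeodesicMap x y γ) {t : ℝ} (ht : t ∈ Icc 0 (dist x y)) :
    seg x (γ t) = γ '' Icc 0 t := by
  rw [hseg x (γ t) γ (hγ.restrict ht), hγ.dist_eq ht]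

lemma IsGeodesicSegments.left_mem (hseg : IsGeodesicSegments seg)
    (hgeo : ∀ x y : X, ∃ γ : ℝ → X, IsGeodesicMap x y γ) (x y : X) : x ∈ seg x y := by
  obtain ⟨γ, hγ⟩ := hgeo x y
  exact hseg x y γ hγ ▸ ⟨0, ⟨le_rfl, dist_nonneg⟩, hγ.1⟩

lemma IsGeodesicSegments.isCompact (hseg : IsGeodesicSegments seg)
    (hgeo : ∀ x y : X, ∃ γ : ℝ → X, IsGeodesicMap x y γ) (x y : X) : IsCompact (seg x y) := by
  obtain ⟨γ, hγ⟩ := hgeo x y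
  exact hseg x y γ hγ ▸ hγ.isCompact_image

lemma IsGeodesicSegments.seg_subset_of_mem (hseg : IsGeodesicSegments seg)
    (hgeo : ∀ x y : X, ∃ γ : ℝ → X, IsGeodesicMap x y γ) {o b p : X} (hp : p ∈ seg o b) :
    seg o p ⊆ seg o b := by
  obtain ⟨γ, hγ⟩ := hgeo o b
  rw [hseg o b γ hγ] at hp ⊢
  obtain ⟨u, hu, rfl⟩ := hp
  rw [hseg.seg_apply_eq_image hγ hu]
  exact image_mono (Icc_subset_Icc_right hu.2)

lemma IsGeodesicSegments.mem_seg_of_dist_le (hseg : IsGeodesicSegments seg)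
    (hgeo : ∀ x y : X, ∃ γ : ℝ → X, IsGeodesicMap x y γ) {o b p q : X} (hp : p ∈ seg o b)
    (hq : q ∈ seg o b) (hpq : dist o p ≤ dist o q) : p ∈ seg o q := by
  obtain ⟨γ, hγ⟩ := hgeo o b
  rw [hseg o b γ hγ] at hp hq
  obtain ⟨t, ht, rfl⟩ := hp
  obtain ⟨s, hs, rfl⟩ := hq
  rw [hγ.dist_eq ht, hγ.dist_eq hs] at hpq
  rw [hseg.seg_apply_eq_image hγ hs]
  exact mem_image_of_mem γ ⟨ht.1, hpq⟩

end Segments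

theorem stmt1_general {X : Type*} [MetricSpace X] (seg : X → X → Set X)
    (hgeo : ∀ x y : X, ∃ γ : ℝ → X, IsGeodesicMap x y γ)
    (hseg : ∀ (x y : X) (γ : ℝ → X), IsGeodesicMap x y γ →
      seg x y = γ '' Set.Icc (0:ℝ) (dist x y))
    (o : X) (B : Set X) (hB : B.Nonempty) :
    ∃ x : X, ⋂ b ∈ B, seg o b = seg o x := by
  have hseg : IsGeodesicSegments seg := hseg
  obtain ⟨b₀, hb₀⟩ := hB
  set I := ⋂ b ∈ B, seg o b
  have hI : IsCompact I :=
    (hseg.isCompact hgeo o b₀).of_isClosed_subset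
      (isClosed_biInter fun b _ => (hseg.isCompact hgeo o b).isClosed) (biInter_subset_of_mem hb₀)
  have hoI : o ∈ I := mem_iInter₂.2 fun b _ => hseg.left_mem hgeo o b
  obtain ⟨x, hxI, hxmax⟩ :=
    hI.exists_isMaxOn ⟨o, hoI⟩ (continuous_const.dist continuous_id).continuousOn
  refine ⟨x, Subset.antisymm (fun p hpI => ?_) ?_⟩
  · exact hseg.mem_seg_of_dist_le hgeo (mem_iInter₂.1 hpI b₀ hb₀) (mem_iInter₂.1 hxI b₀ hb₀)
      (hxmax hpI)
  · exact subset_iInter₂ fun b hb => hseg.seg_subset_of_mem hgeo (mem_iInter₂.1 hxI b hb)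

/-- In an ℝ-tree `X` with marked point `o`, for every nonempty `B ⊆ X` the
intersection `⋂ b ∈ B, [o,b]` is a segment `[o,x]` for some `x ∈ X`. -/
theorem stmt1 {X : Type*} [MetricSpace X] (seg : X → X → Set X)
    (hgeo : ∀ x y : X, ∃ γ : ℝ → X, IsGeodesicMap x y γ)
    (hseg : ∀ (x y : X) (γ : ℝ → X), IsGeodesicMap x y γ →
      seg x y = γ '' Set.Icc (0:ℝ) (dist x y))
    (htree : ∀ x y z : X, seg x y ⊆ seg x z ∪ seg z y)
    (o : X) (B : Set X) (hB : B.Nonempty) :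
    ∃ x : X, ⋂ b ∈ B, seg o b = seg o x :=
  stmt1_general seg hgeo hseg o B hB
end

section
/- Let X be an ℝ-tree, o ∈ X, and let ⪯ be the partial order on X defined by: y ⪯ x if and only if x ∈ [o,y]. Then every nonempty subset B ⊆ X has a supremum with respect to ⪯: there exists s ∈ X such that b ⪯ s for all b ∈ B, and s ⪯ t for every t ∈ X satisfying b ⪯ t for all b ∈ B. -/
/-- In an ℝ-tree `X` with the rooted order `y ⪯ x ↔ x ∈ [o,y]`, every nonempty
subset `B ⊆ X` has a supremum. -/
theorem stmt2 {X : Type*} [MetricSpace X] (seg : X → X → Set X)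
    (hgeo : ∀ x y : X, ∃ γ : ℝ → X, IsGeodesicMap x y γ)
    (hseg : ∀ (x y : X) (γ : ℝ → X), IsGeodesicMap x y γ →
      seg x y = γ '' Set.Icc (0:ℝ) (dist x y))
    (htree : ∀ x y z : X, seg x y ⊆ seg x z ∪ seg z y)
    (o : X) (le : X → X → Prop)
    (hle : ∀ y x : X, le y x ↔ x ∈ seg o y)
    (B : Set X) (hB : B.Nonempty) :
    ∃ s : X, (∀ b ∈ B, le b s) ∧ ∀ t : X, (∀ b ∈ B, le b t) → le s t := by
  classical
  have hcontOn : ∀ (x y : X) (g : ℝ → X), IsGeodesicMap x y g →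
      ContinuousOn g (Set.Icc 0 (dist x y)) := by
    intro x y g hg
    have hlip : LipschitzOnWith 1 g (Set.Icc 0 (dist x y)) := by
      intro s hs t ht
      rw [edist_dist, edist_dist, hg.2.2 s hs t ht]; simp [Real.dist_eq]
    exact hlip.continuousOn
  have hsegeq : ∀ x y : X, ∃ g : ℝ → X, IsGeodesicMap x y g ∧
      seg x y = g '' Set.Icc 0 (dist x y) := by
    intro x y
    obtain ⟨g, hg⟩ := hgeo x y
    exact ⟨g, hg, hseg x y g hg⟩
  have hsegclosed : ∀ x y : X, IsClosed (seg x y) := by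
    intro x y
    obtain ⟨g, hg, heq⟩ := hsegeq x y
    rw [heq]
    exact (isCompact_Icc.image_of_continuousOn (hcontOn x y g hg)).isClosed
  have hmemo : ∀ x y : X, x ∈ seg x y := by
    intro x y
    obtain ⟨g, hg, heq⟩ := hsegeq x y
    rw [heq]
    exact ⟨0, ⟨le_refl 0, dist_nonneg⟩, hg.1⟩
  obtain ⟨b0, hb0⟩ := hB
  obtain ⟨γ, hγ⟩ := hgeo o b0
  obtain ⟨hγ0, hγd, hγi⟩ := hγ
  set d := dist o b0 with hd
  set T : Set ℝ := {t | t ∈ Set.Icc 0 d ∧ ∀ b ∈ B, γ t ∈ seg o b} with hT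
  have hT0 : (0:ℝ) ∈ T := ⟨⟨le_refl 0, dist_nonneg⟩, fun b _ => hγ0 ▸ hmemo o b⟩
  have hTbdd : BddAbove T := ⟨d, fun t ht => ht.1.2⟩
  set m := sSup T with hm
  have hmIcc : m ∈ Set.Icc 0 d :=
    ⟨le_csSup hTbdd hT0, csSup_le ⟨0, hT0⟩ (fun t ht => ht.1.2)⟩
  have hmcl : m ∈ closure T := csSup_mem_closure ⟨0, hT0⟩ hTbdd
  have hcwa : ContinuousWithinAt γ T m :=
    (hcontOn o b0 γ ⟨hγ0, hγd, hγi⟩ m hmIcc).mono (fun t ht => ht.1)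
  have hmmem : ∀ b ∈ B, γ m ∈ seg o b := by
    intro b hb
    have h1 : γ m ∈ closure (γ '' T) := hcwa.mem_closure_image hmcl
    have h2 : γ '' T ⊆ seg o b := by
      rintro _ ⟨t, ht, rfl⟩; exact ht.2 b hb
    have h3 := closure_mono h2 h1
    rwa [(hsegclosed o b).closure_eq] at h3
  have hdos : dist o (γ m) = m := by
    calc dist o (γ m) = dist (γ 0) (γ m) := by rw [hγ0]
      _ = |0 - m| := hγi 0 ⟨le_refl 0, dist_nonneg⟩ m hmIcc
      _ = m := by rw [zero_sub, abs_neg, abs_of_nonneg hmIcc.1]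
  have hgm : IsGeodesicMap o (γ m) γ := by
    refine ⟨hγ0, by rw [hdos], ?_⟩
    intro s hs t ht
    rw [hdos] at hs ht
    exact hγi s ⟨hs.1, hs.2.trans hmIcc.2⟩ t ⟨ht.1, ht.2.trans hmIcc.2⟩
  have hsegs : seg o (γ m) = γ '' Set.Icc 0 m := by
    rw [hseg o (γ m) γ hgm, hdos]
  refine ⟨γ m, fun b hb => (hle b (γ m)).mpr (hmmem b hb), ?_⟩
  intro t ht
  rw [hle, hsegs]
  have htb0 : t ∈ seg o b0 := (hle b0 t).mp (ht b0 hb0)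
  rw [hseg o b0 γ ⟨hγ0, hγd, hγi⟩] at htb0
  obtain ⟨u, hu, rfl⟩ := htb0
  have huT : u ∈ T := ⟨hu, fun b hb => (hle b (γ u)).mp (ht b hb)⟩
  exact ⟨u, ⟨hu.1, le_csSup hTbdd huT⟩, rfl⟩
end

section
/- Let X be an ℝ-tree, o ∈ X, and let ⪯ be the partial order on X defined by: y ⪯ x if and only if x ∈ [o,y]. Then (X, dist, ⪯) is a metric ∨-semilattice: every two points x, y ∈ X have a least upper bound x ∨ y with respect to ⪯, and (1) for all x, z, y ∈ X, if x ⪯ z ⪯ y then dist x z + dist z y = dist x y; (2) for all x, y ∈ X, dist x y = dist x (x ∨ y) + dist (x ∨ y) y. -/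
/-- In an ℝ-tree `X` with the rooted order `y ⪯ x ↔ x ∈ [o,y]`, the triple
`(X, dist, ⪯)` is a metric ∨-semilattice: any two points have a least upper
bound `w = x ∨ y`, betweenness is metric, and `dist x y = dist x w + dist w y`. -/
theorem stmt3 {X : Type*} [MetricSpace X] (seg : X → X → Set X)
    (hgeo : ∀ x y : X, ∃ γ : ℝ → X, IsGeodesicMap x y γ)
    (hseg : ∀ (x y : X) (γ : ℝ → X), IsGeodesicMap x y γ →
      seg x y = γ '' Set.Icc (0:ℝ) (dist x y))
    (htree : ∀ x y z : X, seg x y ⊆ seg x z ∪ seg z y)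
    (o : X) (le : X → X → Prop)
    (hle : ∀ y x : X, le y x ↔ x ∈ seg o y) :
    (∀ x z y : X, le x z → le z y → dist x z + dist z y = dist x y) ∧
    (∀ x y : X, ∃ w : X, le x w ∧ le y w ∧ (∀ t : X, le x t → le y t → le w t) ∧
      dist x y = dist x w + dist w y) := by
  -- forward direction of metric characterization of segments
  have mem_imp : ∀ x y z : X, z ∈ seg x y → dist x z + dist z y = dist x y := by
    intro x y z hz
    obtain ⟨γ, hγ⟩ := hgeo x y
    rw [hseg x y γ hγ] at hz
    obtain ⟨t, ht, rfl⟩ := hz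
    obtain ⟨h0, hD, hiso⟩ := hγ
    have h1 := hiso 0 ⟨le_refl _, dist_nonneg⟩ t ht
    have h2 := hiso t ht (dist x y) ⟨dist_nonneg, le_refl _⟩
    rw [h0] at h1
    rw [hD] at h2
    rw [h1, h2, abs_of_nonpos (by linarith [ht.1]), abs_of_nonpos (by linarith [ht.2])]
    ring
  -- full metric characterization
  have mem_iff : ∀ x y z : X, z ∈ seg x y ↔ dist x z + dist z y = dist x y := by
    intro x y z
    constructor
    · exact mem_imp x y z
    · intro h
      obtain ⟨γ, h0, hD, hiso⟩ := hgeo x y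
      have ha : dist x z ∈ Set.Icc (0:ℝ) (dist x y) :=
        ⟨dist_nonneg, by linarith [dist_nonneg (x := z) (y := y)]⟩
      have hp : γ (dist x z) ∈ seg x y := by
        rw [hseg x y γ ⟨h0, hD, hiso⟩]; exact ⟨_, ha, rfl⟩
      have hdx : dist x (γ (dist x z)) = dist x z := by
        have h1 := hiso 0 ⟨le_refl _, dist_nonneg⟩ _ ha
        rw [h0] at h1
        rw [h1, abs_of_nonpos (by linarith [ha.1])]; ring
      have hdy : dist (γ (dist x z)) y = dist z y := by
        have h1 := hiso _ ha (dist x y) ⟨dist_nonneg, le_refl _⟩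
        rw [hD] at h1
        rw [h1, abs_of_nonpos (by linarith [ha.2])]; linarith
      have hz0 : dist (γ (dist x z)) z = 0 := by
        rcases htree x y z hp with hc | hc
        · have h1 := mem_imp x z _ hc
          rw [hdx] at h1
          linarith
        · have h1 := mem_imp z y _ hc
          rw [hdy] at h1
          have h2 := dist_comm z (γ (dist x z))
          linarith
      have heq : γ (dist x z) = z := by rwa [← dist_eq_zero]
      rw [← heq]; exact hp
  -- two points on a segment
  have dist_two : ∀ x y z w : X, z ∈ seg x y → w ∈ seg x y →
      dist z w = |dist x z - dist x w| := by
    intro x y z w hz hw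
    obtain ⟨γ, h0, hD, hiso⟩ := hgeo x y
    rw [hseg x y γ ⟨h0, hD, hiso⟩] at hz hw
    obtain ⟨s, hs, rfl⟩ := hz
    obtain ⟨t, ht, rfl⟩ := hw
    have h1 := hiso 0 ⟨le_refl _, dist_nonneg⟩ s hs
    have h2 := hiso 0 ⟨le_refl _, dist_nonneg⟩ t ht
    rw [h0] at h1 h2
    have h3 := hiso s hs t ht
    have e1 : |0 - s| = s := by
      rw [abs_of_nonpos (by linarith [hs.1] : (0:ℝ) - s ≤ 0)]; ring
    have e2 : |0 - t| = t := by
      rw [abs_of_nonpos (by linarith [ht.1] : (0:ℝ) - t ≤ 0)]; ring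
    rw [h3, h1, h2, e1, e2]
  constructor
  · intro x z y hxz hzy
    rw [hle, mem_iff] at hxz hzy
    have t1 := dist_triangle o y x
    have t2 := dist_triangle y z x
    have c1 := dist_comm x z
    have c2 := dist_comm z y
    have c3 := dist_comm x y
    linarith
  · intro x y
    obtain ⟨γ, h0, hD, hiso⟩ := hgeo x y
    have hb' : dist o y ≤ dist o x + dist x y := dist_triangle o x y
    have ha' : dist o x ≤ dist o y + dist x y := by
      have := dist_triangle o y x
      have := dist_comm y x
      linarith
    have ht0mem : (dist o x + dist x y - dist o y) / 2 ∈ Set.Icc (0:ℝ) (dist x y) :=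
      ⟨by linarith, by linarith⟩
    set t0 : ℝ := (dist o x + dist x y - dist o y) / 2 with ht0def
    have hw_mem : γ t0 ∈ seg x y := by
      rw [hseg x y γ ⟨h0, hD, hiso⟩]; exact ⟨t0, ht0mem, rfl⟩
    have hdxw : dist x (γ t0) = t0 := by
      have h1 := hiso 0 ⟨le_refl _, dist_nonneg⟩ t0 ht0mem
      rw [h0] at h1
      rw [h1, abs_of_nonpos (by linarith [ht0mem.1])]; ring
    have hdwy : dist (γ t0) y = dist x y - t0 := by
      have h1 := hiso t0 ht0mem (dist x y) ⟨dist_nonneg, le_refl _⟩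
      rw [hD] at h1
      rw [h1, abs_of_nonpos (by linarith [ht0mem.2])]; ring
    have hdow : dist o (γ t0) = (dist o x + dist o y - dist x y) / 2 := by
      rcases htree x y o hw_mem with h | h
      · have h1 := mem_imp x o _ h
        have c1 := dist_comm (γ t0) o
        have c2 := dist_comm x o
        rw [hdxw] at h1
        linarith
      · have h1 := mem_imp o y _ h
        rw [hdwy] at h1
        linarith
    have hwox : γ t0 ∈ seg o x := by
      rw [mem_iff]
      have := dist_comm x (γ t0)
      linarith
    have hwoy : γ t0 ∈ seg o y := by
      rw [mem_iff]
      linarith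
    refine ⟨γ t0, ?_, ?_, ?_, ?_⟩
    · rw [hle]; exact hwox
    · rw [hle]; exact hwoy
    · intro t htx hty
      rw [hle] at htx hty
      rw [hle, mem_iff]
      have h1 := mem_imp o x t htx
      have h2 := mem_imp o y t hty
      have hL2 := dist_two o x t (γ t0) htx hwox
      have htri : dist x y ≤ dist x t + dist t y := dist_triangle x t y
      have c1 := dist_comm x t
      have hle' : dist o t ≤ dist o (γ t0) := by linarith
      rw [hL2, abs_of_nonpos (by linarith)]
      ring
    · linarith
end

section
/- Let X be an ℝ-tree and o ∈ X. Suppose ⪯ is a partial order on X such that (X, dist, ⪯) is a metric ∨-semilattice, ⪯ is upper semilinear, and o is the greatest element of (X, ⪯). Then ⪯ coincides with the order ⪯_(o) defined by: y ⪯_(o) x if and only if x ∈ [o,y]; that is, for all x, y ∈ X, y ⪯ x ↔ x ∈ [o,y]. -/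
/-- Metric betweenness implies membership in the segment: concatenate geodesics. -/
lemma mem_seg_of_between {X : Type*} [MetricSpace X] (seg : X → X → Set X)
    (hgeo : ∀ x y : X, ∃ γ : ℝ → X, IsGeodesicMap x y γ)
    (hseg : ∀ (x y : X) (γ : ℝ → X), IsGeodesicMap x y γ →
      seg x y = γ '' Set.Icc (0:ℝ) (dist x y))
    (a b c : X) (h : dist a b + dist b c = dist a c) : b ∈ seg a c := by
  obtain ⟨γ1, h10, h11, h1iso⟩ := hgeo a b
  obtain ⟨γ2, h20, h21, h2iso⟩ := hgeo b c
  set d1 := dist a b with hd1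
  set d2 := dist b c with hd2
  have hd1nn : 0 ≤ d1 := dist_nonneg
  have hd2nn : 0 ≤ d2 := dist_nonneg
  have hD : dist a c = d1 + d2 := h.symm
  set γ : ℝ → X := fun t => if t ≤ d1 then γ1 t else γ2 (t - d1) with hγ
  -- cross distance estimate
  have cross : ∀ s t : ℝ, 0 ≤ s → s ≤ d1 → ¬ t ≤ d1 → t ≤ d1 + d2 →
      dist (γ1 s) (γ2 (t - d1)) = t - s := by
    intro s t hs0 hs1 ht1 ht2
    have ht1' : d1 < t := lt_of_not_ge ht1
    have hm1 : s ∈ Set.Icc (0:ℝ) d1 := ⟨hs0, hs1⟩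
    have hm2 : (t - d1) ∈ Set.Icc (0:ℝ) d2 := ⟨by linarith, by linarith⟩
    have hA : dist (γ1 s) b = d1 - s := by
      have := h1iso s hm1 d1 ⟨hd1nn, le_refl _⟩
      rw [h11] at this
      rw [this, abs_of_nonpos (by linarith)]; ring
    have hB : dist b (γ2 (t - d1)) = t - d1 := by
      have := h2iso 0 ⟨le_refl _, hd2nn⟩ (t - d1) hm2
      rw [h20] at this
      rw [this, abs_of_nonpos (by linarith)]; ring
    have hC : dist (γ2 (t - d1)) c = d2 - (t - d1) := by
      have := h2iso (t - d1) hm2 d2 ⟨hd2nn, le_refl _⟩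
      rw [h21] at this
      rw [this, abs_of_nonpos (by linarith)]; ring
    have hE : dist a (γ1 s) = s := by
      have := h1iso 0 ⟨le_refl _, hd1nn⟩ s hm1
      rw [h10] at this
      rw [this, abs_of_nonpos (by linarith)]; ring
    have tri1 : dist (γ1 s) (γ2 (t - d1)) ≤ (d1 - s) + (t - d1) := by
      calc dist (γ1 s) (γ2 (t - d1)) ≤ dist (γ1 s) b + dist b (γ2 (t - d1)) :=
            dist_triangle _ _ _
        _ = (d1 - s) + (t - d1) := by rw [hA, hB]
    have tri2 : dist a c ≤ dist a (γ2 (t - d1)) + dist (γ2 (t - d1)) c :=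
      dist_triangle _ _ _
    have tri3 : dist a (γ2 (t - d1)) ≤ dist a (γ1 s) + dist (γ1 s) (γ2 (t - d1)) :=
      dist_triangle _ _ _
    rw [hD, hC] at tri2
    rw [hE] at tri3
    linarith
  have hiso : ∀ s ∈ Set.Icc (0:ℝ) (dist a c), ∀ t ∈ Set.Icc (0:ℝ) (dist a c),
      dist (γ s) (γ t) = |s - t| := by
    intro s hs t ht
    rw [hD] at hs ht
    obtain ⟨hs0, hs2⟩ := hs
    obtain ⟨ht0, ht2⟩ := ht
    simp only [hγ]
    by_cases hs1 : s ≤ d1 <;> by_cases ht1 : t ≤ d1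
    · rw [if_pos hs1, if_pos ht1]
      exact h1iso s ⟨hs0, hs1⟩ t ⟨ht0, ht1⟩
    · rw [if_pos hs1, if_neg ht1, cross s t hs0 hs1 ht1 ht2,
        abs_of_nonpos (by push_neg at ht1; linarith)]
      ring
    · rw [if_neg hs1, if_pos ht1, dist_comm, cross t s ht0 ht1 hs1 hs2,
        abs_of_nonneg (by push_neg at hs1; linarith)]
    · rw [if_neg hs1, if_neg ht1]
      have := h2iso (s - d1) ⟨by push_neg at hs1; linarith, by linarith⟩
        (t - d1) ⟨by push_neg at ht1; linarith, by linarith⟩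
      rw [this]
      congr 1
      ring
  have hγgeo : IsGeodesicMap a c γ := by
    refine ⟨?_, ?_, hiso⟩
    · simp only [hγ, if_pos hd1nn, h10]
    · rw [hD]
      rcases eq_or_lt_of_le hd2nn with h2 | h2
      · have hbc : b = c := by
          have : dist b c = 0 := h2.symm
          exact dist_eq_zero.mp this
        simp only [hγ]
        rw [if_pos (by linarith), show d1 + d2 = d1 by linarith, h11, hbc]
      · simp only [hγ]
        rw [if_neg (by linarith), show d1 + d2 - d1 = d2 by ring, h21]
  rw [hseg a c γ hγgeo]
  exact ⟨d1, ⟨hd1nn, by rw [hD]; linarith⟩, by simp only [hγ, if_pos (le_refl d1), h11]⟩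

/-- Uniqueness of the order: if `⪯` makes an ℝ-tree `X` an upper semilinear
metric ∨-semilattice with greatest element `o`, then `⪯` is the rooted order
`y ⪯ x ↔ x ∈ [o,y]`. -/
theorem stmt4 {X : Type*} [MetricSpace X] (seg : X → X → Set X)
    (hgeo : ∀ x y : X, ∃ γ : ℝ → X, IsGeodesicMap x y γ)
    (hseg : ∀ (x y : X) (γ : ℝ → X), IsGeodesicMap x y γ →
      seg x y = γ '' Set.Icc (0:ℝ) (dist x y))
    (htree : ∀ x y z : X, seg x y ⊆ seg x z ∪ seg z y)
    (o : X) (le : X → X → Prop) (sup : X → X → X)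
    (hrefl : ∀ x : X, le x x)
    (hantisymm : ∀ x y : X, le x y → le y x → x = y)
    (htrans : ∀ x y z : X, le x y → le y z → le x z)
    (hsup_left : ∀ x y : X, le x (sup x y))
    (hsup_right : ∀ x y : X, le y (sup x y))
    (hsup_lub : ∀ x y t : X, le x t → le y t → le (sup x y) t)
    (hbetween : ∀ x z y : X, le x z → le z y → dist x z + dist z y = dist x y)
    (hsupdist : ∀ x y : X, dist x y = dist x (sup x y) + dist (sup x y) y)
    (hsemilin : ∀ x y z : X, le x y → le x z → le y z ∨ le z y)
    (hgreatest : ∀ x : X, le x o) :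
    ∀ x y : X, le y x ↔ x ∈ seg o y := by
  intro x y
  constructor
  · intro h
    have hb := hbetween y x o h (hgreatest x)
    apply mem_seg_of_between seg hgeo hseg
    rw [dist_comm o x, dist_comm o y, dist_comm y x] at *
    linarith
  · intro hx
    obtain ⟨γ, h0, h1, hiso⟩ := hgeo o y
    rw [hseg o y γ ⟨h0, h1, hiso⟩] at hx
    obtain ⟨t, ht, rfl⟩ := hx
    have hDnn : (0:ℝ) ≤ dist o y := dist_nonneg
    have hA : dist o (γ t) = t := by
      have := hiso 0 ⟨le_refl _, hDnn⟩ t ht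
      rw [h0] at this
      rw [this, abs_of_nonpos (by linarith [ht.1])]; ring
    have hB : dist (γ t) y = dist o y - t := by
      have := hiso t ht (dist o y) ⟨hDnn, le_refl _⟩
      rw [h1] at this
      rw [this, abs_of_nonpos (by linarith [ht.2])]; ring
    have hbtw : dist o (γ t) + dist (γ t) y = dist o y := by rw [hA, hB]; ring
    set s := sup (γ t) y with hs
    have e1 := hbetween (γ t) s o (hsup_left _ _) (hgreatest s)
    have e2 := hbetween y s o (hsup_right _ _) (hgreatest s)
    have e3 := hsupdist (γ t) y
    rw [← hs] at e3
    have hzero : dist (γ t) s = 0 := by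
      rw [dist_comm o (γ t), dist_comm o y] at hbtw
      rw [dist_comm s y] at e3
      linarith
    have : s = γ t := (dist_eq_zero.mp hzero).symm
    rw [← this]
    exact hsup_right _ _
end

section
/- Let X be a geodesic metric space equipped with an upper semilinear partial order ⪯ such that (X, dist, ⪯) is a metric ∨-semilattice. Then X is an ℝ-tree: every two points x, y ∈ X are joined by a unique isometric map γ : [0, dist x y] → X with γ(0) = x and γ(dist x y) = y, and for all x, y, z ∈ X the image of the geodesic segment from x to y is contained in the union of the images of the geodesic segments from x to z and from z to y. -/
/-- A geodesic metric space carrying an upper semilinear partial order making it a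
metric ∨-semilattice is an ℝ-tree: geodesics are unique, and every side of a
triangle lies in the union of the other two sides. -/
theorem stmt5 {X : Type*} [MetricSpace X] (hgeo : ∀ x y : X, ∃ γ : ℝ → X, IsGeodesicMap x y γ)
    (le : X → X → Prop) (sup : X → X → X)
    (hrefl : ∀ x : X, le x x)
    (hantisymm : ∀ x y : X, le x y → le y x → x = y)
    (htrans : ∀ x y z : X, le x y → le y z → le x z)
    (hsup_left : ∀ x y : X, le x (sup x y))
    (hsup_right : ∀ x y : X, le y (sup x y))
    (hsup_lub : ∀ x y t : X, le x t → le y t → le (sup x y) t)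
    (hbetween : ∀ x z y : X, le x z → le z y → dist x z + dist z y = dist x y)
    (hsupdist : ∀ x y : X, dist x y = dist x (sup x y) + dist (sup x y) y)
    (hsemilin : ∀ x y z : X, le x y → le x z → le y z ∨ le z y) :
    (∀ (x y : X) (γ₁ γ₂ : ℝ → X), IsGeodesicMap x y γ₁ → IsGeodesicMap x y γ₂ →
      Set.EqOn γ₁ γ₂ (Set.Icc (0:ℝ) (dist x y))) ∧
    (∀ (x y z : X) (γxy γxz γzy : ℝ → X),
      IsGeodesicMap x y γxy → IsGeodesicMap x z γxz → IsGeodesicMap z y γzy →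
      γxy '' Set.Icc (0:ℝ) (dist x y) ⊆
        γxz '' Set.Icc (0:ℝ) (dist x z) ∪ γzy '' Set.Icc (0:ℝ) (dist z y)) := by
  clear hgeo
  have hdzero : ∀ x y : X, dist x y = 0 → x = y := fun x y h => dist_eq_zero.mp h
  have hsup_comm : ∀ x y : X, sup x y = sup y x := fun x y =>
    hantisymm _ _ (hsup_lub x y (sup y x) (hsup_right y x) (hsup_left y x))
      (hsup_lub y x (sup x y) (hsup_right x y) (hsup_left x y))
  -- Half of Lemma L: if w is metrically between x and y and sup x w ⪯ sup w y,
  -- then x ⪯ w ⪯ sup x y.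
  have L1 : ∀ x w y : X, dist x w + dist w y = dist x y →
      le (sup x w) (sup w y) → le x w ∧ le w (sup x y) := by
    intro x w y H hab
    have hxa := hsup_left x w
    have hwa := hsup_right x w
    have hwb := hsup_left w y
    have hyb := hsup_right w y
    have hxm := hsup_left x y
    have hym := hsup_right x y
    have hmb : le (sup x y) (sup w y) :=
      hsup_lub x y _ (htrans _ _ _ hxa hab) hyb
    have e1 := hsupdist x w
    have e2 := hsupdist w y
    have e5 := hsupdist x y
    rcases hsemilin x (sup x w) (sup x y) hxa hxm with ham | hma
    · -- sup x w ⪯ sup x y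
      have e3 := hbetween w (sup x w) (sup w y) hwa hab
      have e4 := hbetween (sup x w) (sup x y) (sup w y) ham hmb
      have e6 := hbetween y (sup x y) (sup w y) hym hmb
      have e7 := hbetween x (sup x w) (sup x y) hxa ham
      have h1 : dist (sup x w) w = 0 := by
        linarith [dist_comm (sup x w) w, dist_comm (sup w y) y, dist_comm (sup x y) y,
          dist_nonneg (x := sup x y) (y := sup w y), dist_nonneg (x := sup x w) (y := w)]
      have haw : sup x w = w := hdzero _ _ h1
      rw [haw] at hxa ham
      exact ⟨hxa, ham⟩
    · -- sup x y ⪯ sup x w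
      have hba : le (sup w y) (sup x w) :=
        hsup_lub w y _ hwa (htrans y (sup x y) (sup x w) hym hma)
      have heab : sup w y = sup x w := hantisymm _ _ hba hab
      rw [heab] at e2
      have e3 := hbetween x (sup x y) (sup x w) hxm hma
      have e4 := hbetween y (sup x y) (sup x w) hym hma
      have h1 : dist (sup x w) w = 0 := by
        linarith [dist_comm (sup x w) w, dist_comm (sup x w) y, dist_comm (sup x y) y,
          dist_nonneg (x := sup x y) (y := sup x w), dist_nonneg (x := sup x w) (y := w)]
      have h2 : dist (sup x y) (sup x w) = 0 := by
        linarith [dist_comm (sup x w) w, dist_comm (sup x w) y, dist_comm (sup x y) y,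
          dist_nonneg (x := sup x y) (y := sup x w), dist_nonneg (x := sup x w) (y := w)]
      have haw : sup x w = w := hdzero _ _ h1
      have hma' : sup x y = sup x w := hdzero _ _ h2
      constructor
      · rw [haw] at hxa; exact hxa
      · rw [hma', haw]; exact hrefl w
  -- Lemma L: a metrically between point lies order-between an endpoint and the sup.
  have L : ∀ x w y : X, dist x w + dist w y = dist x y →
      (le x w ∧ le w (sup x y)) ∨ (le y w ∧ le w (sup x y)) := by
    intro x w y H
    rcases hsemilin w (sup x w) (sup w y) (hsup_right x w) (hsup_left w y) with h | h
    · exact Or.inl (L1 x w y H h)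
    · have H' : dist y w + dist w x = dist y x := by
        have := dist_comm x w; have := dist_comm w y; have := dist_comm x y; linarith
      have h' : le (sup y w) (sup w x) := by
        rw [hsup_comm y w, hsup_comm w x]; exact h
      obtain ⟨h1, h2⟩ := L1 y w x H' h'
      rw [hsup_comm y x] at h2
      exact Or.inr ⟨h1, h2⟩
  -- two comparable points at the same distance from a common lower bound coincide
  have E : ∀ x w w' : X, le x w → le x w' → dist x w = dist x w' → w = w' := by
    intro x w w' h1 h2 hd
    rcases hsemilin x w w' h1 h2 with h | h
    · have := hbetween x w w' h1 h
      exact hdzero _ _ (by linarith)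
    · have := hbetween x w' w h2 h
      exact (hdzero _ _ (by linarith)).symm
  -- Uniqueness of metrically between points
  have U : ∀ x y w w' : X, dist x w + dist w y = dist x y →
      dist x w' + dist w' y = dist x y → dist x w = dist x w' → w = w' := by
    intro x y w w' H1 H2 hd
    rcases L x w y H1 with ⟨hxw, hwm⟩ | ⟨hyw, hwm⟩ <;>
      rcases L x w' y H2 with ⟨hxw', hw'm⟩ | ⟨hyw', hw'm⟩
    · exact E x w w' hxw hxw' hd
    · -- x ⪯ w, y ⪯ w'
      have a1 := hbetween x w (sup x y) hxw hwm
      have a2 := hbetween y w' (sup x y) hyw' hw'm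
      have e5 := hsupdist x y
      have c1 := dist_comm (sup x y) y
      have c2 := dist_comm w' y
      have h1 : dist w (sup x y) = 0 := by
        linarith [dist_nonneg (x := w) (y := sup x y), dist_nonneg (x := w') (y := sup x y)]
      have h2 : dist w' (sup x y) = 0 := by
        linarith [dist_nonneg (x := w) (y := sup x y), dist_nonneg (x := w') (y := sup x y)]
      rw [hdzero _ _ h1, hdzero _ _ h2]
    · -- y ⪯ w, x ⪯ w'
      have a1 := hbetween x w' (sup x y) hxw' hw'm
      have a2 := hbetween y w (sup x y) hyw hwm
      have e5 := hsupdist x y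
      have c1 := dist_comm (sup x y) y
      have c2 := dist_comm w y
      have h1 : dist w (sup x y) = 0 := by
        linarith [dist_nonneg (x := w) (y := sup x y), dist_nonneg (x := w') (y := sup x y)]
      have h2 : dist w' (sup x y) = 0 := by
        linarith [dist_nonneg (x := w) (y := sup x y), dist_nonneg (x := w') (y := sup x y)]
      rw [hdzero _ _ h1, hdzero _ _ h2]
    · -- y ⪯ w, y ⪯ w'
      have hd' : dist y w = dist y w' := by
        have := dist_comm w y; have := dist_comm w' y; linarith
      exact E y w w' hyw hyw' hd'
  -- half of the tree lemma
  have T1 : ∀ x w y z : X, le x w → le w (sup x y) →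
      dist x w + dist w y = dist x y →
      dist x w + dist w z = dist x z ∨ dist z w + dist w y = dist z y := by
    intro x w y z hxw hwm H
    have hnk : le (sup x z) (sup w z) :=
      hsup_lub x z _ (htrans x w _ hxw (hsup_left w z)) (hsup_right w z)
    rcases hsemilin x w (sup x z) hxw (hsup_left x z) with hwn | hnw
    · left
      have hkn : le (sup w z) (sup x z) := hsup_lub w z _ hwn (hsup_right x z)
      have hk : sup w z = sup x z := hantisymm _ _ hkn hnk
      have e1 := hsupdist x z
      have e2 := hsupdist w z
      rw [hk] at e2
      have e3 := hbetween x w (sup x z) hxw hwn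
      linarith
    · have hzw : le z w := htrans z (sup x z) w (hsup_right x z) hnw
      rcases hsemilin z w (sup z y) hzw (hsup_left z y) with hwq | hqw
      · right
        have hq : sup w y = sup z y :=
          hantisymm _ _ (hsup_lub w y _ hwq (hsup_right z y))
            (hsup_lub z y _ (htrans z w _ hzw (hsup_left w y)) (hsup_right w y))
        have e1 := hsupdist z y
        have e2 := hsupdist w y
        rw [hq] at e2
        have e3 := hbetween z w (sup z y) hzw hwq
        linarith
      · -- sup z y ⪯ w ; then w = sup x y
        have hyw : le y w := htrans y (sup z y) w (hsup_right z y) hqw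
        have e1 := hbetween x w (sup x y) hxw hwm
        have e2 := hbetween y w (sup x y) hyw hwm
        have e3 := hsupdist x y
        have hwm0 : dist w (sup x y) = 0 := by
          linarith [dist_comm w y, dist_comm (sup x y) y,
            dist_nonneg (x := w) (y := sup x y)]
        have hwem : w = sup x y := hdzero _ _ hwm0
        rcases hsemilin z (sup x z) (sup z y) (hsup_right x z) (hsup_left z y) with hnq | hqn
        · right
          have hmq : le (sup x y) (sup z y) :=
            hsup_lub x y _ (htrans x (sup x z) _ (hsup_left x z) hnq) (hsup_right z y)
          have hq : sup z y = w := hantisymm _ _ hqw (by rw [hwem]; exact hmq)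
          have e4 := hsupdist z y
          rw [hq] at e4
          exact e4.symm
        · left
          have hmn : le (sup x y) (sup x z) :=
            hsup_lub x y _ (hsup_left x z) (htrans y (sup z y) _ (hsup_right z y) hqn)
          have hn : sup x z = w := hantisymm _ _ hnw (by rw [hwem]; exact hmn)
          have e4 := hsupdist x z
          rw [hn] at e4
          exact e4.symm
  -- the tree lemma
  have T : ∀ x w y : X, dist x w + dist w y = dist x y → ∀ z : X,
      dist x w + dist w z = dist x z ∨ dist z w + dist w y = dist z y := by
    intro x w y H z
    rcases L x w y H with ⟨h1, h2⟩ | ⟨h1, h2⟩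
    · exact T1 x w y z h1 h2 H
    · have H' : dist y w + dist w x = dist y x := by
        have := dist_comm x w; have := dist_comm w y; have := dist_comm x y; linarith
      have h2' : le w (sup y x) := by rw [hsup_comm y x]; exact h2
      rcases T1 y w x z h1 h2' H' with h | h
      · right
        have := dist_comm y w; have := dist_comm w y; have := dist_comm y z
        have := dist_comm z y; have := dist_comm w z; have := dist_comm z w; linarith
      · left
        have := dist_comm z w; have := dist_comm w x; have := dist_comm z x
        have := dist_comm x w; have := dist_comm x z; linarith
  -- points on geodesics
  have G : ∀ (x y : X) (γ : ℝ → X), IsGeodesicMap x y γ →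
      ∀ t ∈ Set.Icc (0:ℝ) (dist x y),
        dist x (γ t) = t ∧ dist x (γ t) + dist (γ t) y = dist x y := by
    rintro x y γ ⟨h0, hD, hiso⟩ t ht
    have h1 : dist x (γ t) = t := by
      have h := hiso 0 ⟨le_refl 0, dist_nonneg⟩ t ht
      rw [h0] at h
      rw [h, zero_sub, abs_neg, abs_of_nonneg ht.1]
    have h2 : dist (γ t) y = dist x y - t := by
      have h := hiso t ht (dist x y) ⟨dist_nonneg, le_refl _⟩
      rw [hD] at h
      rw [h, abs_of_nonpos (by linarith [ht.2]), neg_sub]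
    exact ⟨h1, by rw [h1, h2]; ring⟩
  constructor
  · intro x y γ₁ γ₂ h1 h2 t ht
    obtain ⟨d1, b1⟩ := G x y γ₁ h1 t ht
    obtain ⟨d2, b2⟩ := G x y γ₂ h2 t ht
    exact U x y _ _ b1 b2 (d1.trans d2.symm)
  · rintro x y z γxy γxz γzy hxy hxz hzy p ⟨t, ht, rfl⟩
    obtain ⟨d, b⟩ := G x y γxy hxy t ht
    rcases T x (γxy t) y b z with hx | hz
    · left
      have hr : dist x (γxy t) ∈ Set.Icc (0:ℝ) (dist x z) :=
        ⟨dist_nonneg, by linarith [dist_nonneg (x := γxy t) (y := z)]⟩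
      obtain ⟨d', b'⟩ := G x z γxz hxz _ hr
      exact ⟨_, hr, U x z _ _ b' hx d'⟩
    · right
      have hr : dist z (γxy t) ∈ Set.Icc (0:ℝ) (dist z y) :=
        ⟨dist_nonneg, by linarith [dist_nonneg (x := γxy t) (y := y)]⟩
      obtain ⟨d', b'⟩ := G z y γzy hzy _ hr
      exact ⟨_, hr, U z y _ _ b' hz d'⟩
end

section
/- Let X be a geodesic metric space equipped with an upper semilinear partial order ⪯ such that (X, dist, ⪯) is a metric ∨-semilattice. If x, y, z ∈ X are such that x ⪯ y and dist x z + dist z y = dist x y, then x ⪯ z and z ⪯ y. -/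
/-- In a geodesic metric space which is an upper semilinear metric ∨-semilattice,
if `x ⪯ y` and `z` lies metrically between `x` and `y`, then `x ⪯ z ⪯ y`. -/
theorem stmt6 {X : Type*} [MetricSpace X] (hgeo : ∀ x y : X, ∃ γ : ℝ → X, IsGeodesicMap x y γ)
    (le : X → X → Prop) (sup : X → X → X)
    (hrefl : ∀ x : X, le x x)
    (hantisymm : ∀ x y : X, le x y → le y x → x = y)
    (htrans : ∀ x y z : X, le x y → le y z → le x z)
    (hsup_left : ∀ x y : X, le x (sup x y))
    (hsup_right : ∀ x y : X, le y (sup x y))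
    (hsup_lub : ∀ x y t : X, le x t → le y t → le (sup x y) t)
    (hbetween : ∀ x z y : X, le x z → le z y → dist x z + dist z y = dist x y)
    (hsupdist : ∀ x y : X, dist x y = dist x (sup x y) + dist (sup x y) y)
    (hsemilin : ∀ x y z : X, le x y → le x z → le y z ∨ le z y)
    (x y z : X) (hxy : le x y) (hz : dist x z + dist z y = dist x y) :
    le x z ∧ le z y := by
  set s := sup x z with hs
  have hxs : le x s := hsup_left x z
  have hzs : le z s := hsup_right x z
  have h1 : dist x z = dist x s + dist s z := hsupdist x z
  rcases hsemilin x s y hxs hxy with hsy | hys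
  · have h2 : dist x s + dist s y = dist x y := hbetween x s y hxs hsy
    have h3 : dist z s + dist s y = dist z y := hbetween z s y hzs hsy
    have hzs0 : dist z s = 0 := by
      have := dist_comm s z
      nlinarith [dist_nonneg (x := z) (y := s)]
    have hzeq : z = s := by rwa [dist_eq_zero] at hzs0
    exact ⟨hzeq ▸ hxs, hzeq ▸ hsy⟩
  · have hteq : sup z y = s := by
      refine hantisymm _ _ (hsup_lub z y s hzs hys) (hsup_lub x z (sup z y)
        (htrans x y _ hxy (hsup_right z y)) (hsup_left z y))
    have h2 : dist z y = dist z s + dist s y := by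
      have := hsupdist z y
      rwa [hteq] at this
    have h3 : dist x y + dist y s = dist x s := hbetween x y s hxy hys
    have hzs0 : dist z s = 0 ∧ dist y s = 0 := by
      constructor <;> nlinarith [dist_nonneg (x := z) (y := s), dist_nonneg (x := y) (y := s),
        dist_comm s z, dist_comm s y]
    have hzeq : z = s := by rw [← dist_eq_zero]; exact hzs0.1
    have hyeq : y = s := by rw [← dist_eq_zero]; exact hzs0.2
    have hzy : z = y := by rw [hzeq, hyeq]
    exact ⟨hzy ▸ hxy, hzy ▸ hrefl z⟩
end

section
/- Let X be a geodesic metric space equipped with an upper semilinear partial order ⪯ such that (X, dist, ⪯) is a metric ∨-semilattice. Then geodesic segments in X are unique: for any x, y ∈ X, if γ₁, γ₂ : [0, dist x y] → X are isometric maps with γ₁(0) = γ₂(0) = x and γ₁(dist x y) = γ₂(dist x y) = y, then γ₁ = γ₂. -/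
/-- In a geodesic metric space which is an upper semilinear metric ∨-semilattice,
geodesic segments are unique. -/
theorem stmt7 {X : Type*} [MetricSpace X] (hgeo : ∀ x y : X, ∃ γ : ℝ → X, IsGeodesicMap x y γ)
    (le : X → X → Prop) (sup : X → X → X)
    (hrefl : ∀ x : X, le x x)
    (hantisymm : ∀ x y : X, le x y → le y x → x = y)
    (htrans : ∀ x y z : X, le x y → le y z → le x z)
    (hsup_left : ∀ x y : X, le x (sup x y))
    (hsup_right : ∀ x y : X, le y (sup x y))
    (hsup_lub : ∀ x y t : X, le x t → le y t → le (sup x y) t)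
    (hbetween : ∀ x z y : X, le x z → le z y → dist x z + dist z y = dist x y)
    (hsupdist : ∀ x y : X, dist x y = dist x (sup x y) + dist (sup x y) y)
    (hsemilin : ∀ x y z : X, le x y → le x z → le y z ∨ le z y)
    (x y : X) (γ₁ γ₂ : ℝ → X)
    (h₁ : IsGeodesicMap x y γ₁) (h₂ : IsGeodesicMap x y γ₂) :
    Set.EqOn γ₁ γ₂ (Set.Icc (0:ℝ) (dist x y)) := by
  have hsupcomm : ∀ a b : X, sup a b = sup b a := fun a b =>
    hantisymm _ _ (hsup_lub a b _ (hsup_right b a) (hsup_left b a))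
      (hsup_lub b a _ (hsup_right a b) (hsup_left a b))
  -- Key lemma
  have L : ∀ a b z : X, dist a z + dist z b = dist a b →
      dist a z ≤ dist a (sup a b) → le a z ∧ le z (sup a b) := by
    intro a b z hsum hle
    have ham : le a (sup a b) := hsup_left a b
    have hbm : le b (sup a b) := hsup_right a b
    have han : le a (sup a z) := hsup_left a z
    have hzn : le z (sup a z) := hsup_right a z
    have hdaz : dist a z = dist a (sup a z) + dist (sup a z) z := hsupdist a z
    have hdab : dist a b = dist a (sup a b) + dist (sup a b) b := hsupdist a b
    rcases hsemilin a (sup a b) (sup a z) ham han with hmn | hnm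
    · -- m ⪯ n : forces z = m
      have h1 : dist a (sup a b) + dist (sup a b) (sup a z) = dist a (sup a z) :=
        hbetween a (sup a b) (sup a z) ham hmn
      have e1 : dist (sup a b) (sup a z) = 0 := by
        nlinarith [dist_nonneg (x := sup a z) (y := z), dist_nonneg (x := sup a b) (y := sup a z)]
      have e2 : dist (sup a z) z = 0 := by
        nlinarith [dist_nonneg (x := sup a z) (y := z), dist_nonneg (x := sup a b) (y := sup a z)]
      have hnm' : sup a b = sup a z := dist_eq_zero.mp e1
      have hnz : sup a z = z := dist_eq_zero.mp e2
      have hz : z = sup a b := by rw [hnm', hnz]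
      subst hz
      exact ⟨ham, hrefl _⟩
    · -- n ⪯ m
      have hzr : le z (sup z b) := hsup_left z b
      have hbr : le b (sup z b) := hsup_right z b
      have hdzb : dist z b = dist z (sup z b) + dist (sup z b) b := hsupdist z b
      rcases hsemilin z (sup a z) (sup z b) hzn hzr with hnr | hrn
      · -- n ⪯ r : z = n
        have h2 : dist z (sup a z) + dist (sup a z) (sup z b) = dist z (sup z b) :=
          hbetween z (sup a z) (sup z b) hzn hnr
        have h3 : dist a (sup a z) + dist (sup a z) (sup z b) = dist a (sup z b) :=
          hbetween a (sup a z) (sup z b) han hnr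
        have htri : dist a b ≤ dist a (sup z b) + dist (sup z b) b := dist_triangle _ _ _
        have e : dist (sup a z) z = 0 := by
          have hc : dist z (sup a z) = dist (sup a z) z := dist_comm _ _
          nlinarith [dist_nonneg (x := sup a z) (y := z)]
        have hz : z = sup a z := (dist_eq_zero.mp e).symm
        constructor
        · rw [hz]; exact han
        · rw [hz]; exact hnm
      · -- r ⪯ n : z = r, so b ⪯ z
        have h2 : dist z (sup z b) + dist (sup z b) (sup a z) = dist z (sup a z) :=
          hbetween z (sup z b) (sup a z) hzr hrn
        have h3 : dist b (sup z b) + dist (sup z b) (sup a z) = dist b (sup a z) :=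
          hbetween b (sup z b) (sup a z) hbr hrn
        have htri : dist a b ≤ dist a (sup a z) + dist (sup a z) b := dist_triangle _ _ _
        have e : dist z (sup z b) = 0 := by
          have hc1 : dist (sup a z) z = dist z (sup a z) := dist_comm _ _
          have hc2 : dist (sup a z) b = dist b (sup a z) := dist_comm _ _
          have hc3 : dist (sup z b) b = dist b (sup z b) := dist_comm _ _
          nlinarith [dist_nonneg (x := z) (y := sup z b)]
        have hz : z = sup z b := (dist_eq_zero.mp e)
        have hbz : le b z := by rw [hz]; exact hbr
        rcases hsemilin b z (sup a b) hbz hbm with hzm | hmz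
        · have h4 : dist b z + dist z (sup a b) = dist b (sup a b) := hbetween b z (sup a b) hbz hzm
          have e2 : dist z (sup a b) = 0 := by
            have hc1 : dist b z = dist z b := dist_comm _ _
            have hc2 : dist (sup a b) b = dist b (sup a b) := dist_comm _ _
            nlinarith [dist_nonneg (x := z) (y := sup a b)]
          have hzm' : z = sup a b := dist_eq_zero.mp e2
          subst hzm'; exact ⟨ham, hrefl _⟩
        · have h4 : dist a (sup a b) + dist (sup a b) z = dist a z := hbetween a (sup a b) z ham hmz
          have e2 : dist (sup a b) z = 0 := by
            nlinarith [dist_nonneg (x := sup a b) (y := z)]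
          have hzm' : sup a b = z := dist_eq_zero.mp e2
          rw [← hzm']; exact ⟨ham, hrefl _⟩
  -- uniqueness of metric between-points
  have key : ∀ z w : X, dist x z + dist z y = dist x y → dist x w + dist w y = dist x y →
      dist x z = dist x w → z = w := by
    intro z w hz hw hzw
    rcases le_or_gt (dist x z) (dist x (sup x y)) with h | h
    · obtain ⟨h1, h2⟩ := L x y z hz h
      obtain ⟨h3, h4⟩ := L x y w hw (hzw ▸ h)
      rcases hsemilin x z w h1 h3 with h5 | h5
      · have h6 := hbetween x z w h1 h5
        have : dist z w = 0 := by linarith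
        exact dist_eq_zero.mp this
      · have h6 := hbetween x w z h3 h5
        have : dist w z = 0 := by linarith
        exact (dist_eq_zero.mp this).symm
    · have hsd := hsupdist x y
      have hyz : dist y z + dist z x = dist y x := by
        rw [dist_comm y z, dist_comm z x, dist_comm y x]; linarith
      have hyw : dist y w + dist w x = dist y x := by
        rw [dist_comm y w, dist_comm w x, dist_comm y x]; linarith
      have hcm : sup y x = sup x y := hsupcomm y x
      have hlez : dist y z ≤ dist y (sup y x) := by
        rw [dist_comm y z, hcm, dist_comm y (sup x y)]
        linarith
      have hlew : dist y w ≤ dist y (sup y x) := by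
        rw [dist_comm y w, hcm, dist_comm y (sup x y)]
        linarith
      obtain ⟨h1, h2⟩ := L y x z hyz hlez
      obtain ⟨h3, h4⟩ := L y x w hyw hlew
      have hdyzw : dist y z = dist y w := by
        rw [dist_comm y z, dist_comm y w]; linarith
      rcases hsemilin y z w h1 h3 with h5 | h5
      · have h6 := hbetween y z w h1 h5
        have : dist z w = 0 := by linarith
        exact dist_eq_zero.mp this
      · have h6 := hbetween y w z h3 h5
        have : dist w z = 0 := by linarith
        exact (dist_eq_zero.mp this).symm
  -- conclude
  intro t ht
  obtain ⟨a0, ad, aiso⟩ := h₁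
  obtain ⟨b0, bd, biso⟩ := h₂
  have hd : (0:ℝ) ≤ dist x y := dist_nonneg
  have h0mem : (0:ℝ) ∈ Set.Icc (0:ℝ) (dist x y) := ⟨le_refl _, hd⟩
  have hdmem : dist x y ∈ Set.Icc (0:ℝ) (dist x y) := ⟨hd, le_refl _⟩
  have dxz : dist x (γ₁ t) = t := by
    rw [← a0, aiso 0 h0mem t ht, abs_sub_comm]
    simp [abs_of_nonneg ht.1]
  have dzy : dist (γ₁ t) y = dist x y - t := by
    have h := aiso t ht _ hdmem
    rw [ad] at h
    rw [h, abs_of_nonpos (by linarith [ht.2])]; ring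
  have dxw : dist x (γ₂ t) = t := by
    rw [← b0, biso 0 h0mem t ht, abs_sub_comm]
    simp [abs_of_nonneg ht.1]
  have dwy : dist (γ₂ t) y = dist x y - t := by
    have h := biso t ht _ hdmem
    rw [bd] at h
    rw [h, abs_of_nonpos (by linarith [ht.2])]; ring
  exact key (γ₁ t) (γ₂ t) (by rw [dxz, dzy]; ring) (by rw [dxw, dwy]; ring) (by rw [dxz, dxw])
end

section
/- Let X be an ℝ-tree and let o, o' ∈ X. For a point p ∈ X, let τ_p = {(s,t) ∈ X × X : t ∈ [p,s]} denote the graph of the rooted order with root p. Then the Hausdorff distance between τ_o and τ_{o'}, computed in X × X with the sum metric d₊((x₁,x₂),(y₁,y₂)) = dist x₁ y₁ + dist x₂ y₂, is finite and equal to dist o o'. -/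
/-- The sum metric on `X × X`. -/
noncomputable def sumDist {X : Type*} [MetricSpace X] (v w : X × X) : ℝ :=
  dist v.1 w.1 + dist v.2 w.2

/-- For an ℝ-tree `X` and roots `o, o'`, the Hausdorff distance (computed in `X × X`
with the sum metric, as `inf {ε > 0 | each graph lies in the ε-neighbourhood of the
other}`) between the graphs `τ_o = {(s,t) | t ∈ [o,s]}` and `τ_{o'}` is finite
(the set of admissible `ε` is nonempty) and equals `dist o o'`. -/
theorem stmt8 {X : Type*} [MetricSpace X] (seg : X → X → Set X)
    (hgeo : ∀ x y : X, ∃ γ : ℝ → X, IsGeodesicMap x y γ)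
    (hseg : ∀ (x y : X) (γ : ℝ → X), IsGeodesicMap x y γ →
      seg x y = γ '' Set.Icc (0:ℝ) (dist x y))
    (htree : ∀ x y z : X, seg x y ⊆ seg x z ∪ seg z y)
    (o o' : X) (τ τ' : Set (X × X))
    (hτ : τ = {v : X × X | v.2 ∈ seg o v.1})
    (hτ' : τ' = {w : X × X | w.2 ∈ seg o' w.1}) :
    {ε : ℝ | 0 < ε ∧ (∀ v ∈ τ, ∃ w ∈ τ', sumDist v w < ε) ∧
        (∀ w ∈ τ', ∃ v ∈ τ, sumDist v w < ε)}.Nonempty ∧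
    sInf {ε : ℝ | 0 < ε ∧ (∀ v ∈ τ, ∃ w ∈ τ', sumDist v w < ε) ∧
        (∀ w ∈ τ', ∃ v ∈ τ, sumDist v w < ε)} = dist o o' := by
  -- Basic facts about segments
  have key : ∀ x y : X, x ∈ seg x y ∧ y ∈ seg x y ∧
      ∀ t ∈ seg x y, dist x t + dist t y = dist x y := by
    intro x y
    obtain ⟨γ, h0, hD, hiso⟩ := hgeo x y
    have hs := hseg x y γ ⟨h0, hD, hiso⟩
    refine ⟨?_, ?_, ?_⟩
    · rw [hs]; exact ⟨0, ⟨le_refl 0, dist_nonneg⟩, h0⟩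
    · rw [hs]; exact ⟨dist x y, ⟨dist_nonneg, le_refl _⟩, hD⟩
    · intro t ht
      rw [hs] at ht
      obtain ⟨s, hsI, rfl⟩ := ht
      have h1 : dist x (γ s) = s := by
        rw [← h0, hiso 0 ⟨le_rfl, dist_nonneg⟩ s hsI,
          show (0:ℝ) - s = -s by ring, abs_neg, abs_of_nonneg hsI.1]
      have h2 : dist (γ s) y = dist x y - s := by
        conv_lhs => rw [← hD]
        rw [hiso s hsI (dist x y) ⟨dist_nonneg, le_rfl⟩,
          abs_of_nonpos (by linarith [hsI.2])]
        ring
      rw [h1, h2]; ring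
  set d := dist o o' with hd
  have hmem : ∀ ε : ℝ, (0 < ε ∧ (∀ v ∈ τ, ∃ w ∈ τ', sumDist v w < ε) ∧
      (∀ w ∈ τ', ∃ v ∈ τ, sumDist v w < ε)) ↔ d < ε := by
    intro ε
    constructor
    · rintro ⟨hε, _, h2⟩
      obtain ⟨v, hv, hvd⟩ := h2 (o, o') (by rw [hτ']; exact (key o' o).1)
      rw [hτ] at hv
      have hsum : dist v.1 o + dist v.2 o' < ε := hvd
      have h3 := (key o v.1).2.2 v.2 hv
      have h4 := dist_triangle o v.2 o'
      have h5 : dist o v.1 = dist v.1 o := dist_comm _ _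
      have h6 := dist_nonneg (x := v.2) (y := v.1)
      calc d ≤ dist o v.2 + dist v.2 o' := h4
        _ < ε := by linarith
    · intro hε
      have hd0 : 0 ≤ d := dist_nonneg
      refine ⟨by linarith, ?_, ?_⟩
      · intro v hv
        rw [hτ] at hv
        rcases htree o v.1 o' hv with h | h
        · refine ⟨(v.1, o'), by rw [hτ']; exact (key o' v.1).1, ?_⟩
          have := (key o o').2.2 v.2 h
          have h6 := dist_nonneg (x := o) (y := v.2)
          show dist v.1 v.1 + dist v.2 o' < ε
          rw [dist_self]
          linarith
        · exact ⟨v, by rw [hτ']; exact h, by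
            show dist v.1 v.1 + dist v.2 v.2 < ε; simp; linarith⟩
      · intro w hw
        rw [hτ'] at hw
        rcases htree o' w.1 o hw with h | h
        · refine ⟨(w.1, o), by rw [hτ]; exact (key o w.1).1, ?_⟩
          have := (key o' o).2.2 w.2 h
          have h6 := dist_nonneg (x := o') (y := w.2)
          have h7 : dist o' o = d := dist_comm o' o
          have h8 : dist o w.2 = dist w.2 o := dist_comm _ _
          show dist w.1 w.1 + dist o w.2 < ε
          rw [dist_self]
          linarith
        · exact ⟨w, by rw [hτ]; exact h, by
            show dist w.1 w.1 + dist w.2 w.2 < ε; simp; linarith⟩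
  have hset : {ε : ℝ | 0 < ε ∧ (∀ v ∈ τ, ∃ w ∈ τ', sumDist v w < ε) ∧
      (∀ w ∈ τ', ∃ v ∈ τ, sumDist v w < ε)} = Set.Ioi d :=
    Set.ext fun ε => (hmem ε)
  rw [hset]
  exact ⟨⟨d + 1, by simp⟩, csInf_Ioi⟩
end

section
/- Let G be a nontrivial additive group and let X_G be the set of pairs (a, f) with a > 0 real and f : ℝ → G such that f(t) = 0 for t ≤ a, f(t) = 0 for all sufficiently large t, and f is piecewise constant from the left on (a, ∞). For p = (a,f), q = (b,g) ∈ X_G set c(p,q) = max(a, b, inf{x : f(t) = g(t) for all t > x}) and ρ(p,q) = (c(p,q) − a) + (c(p,q) − b). Then ρ is a metric on X_G, the metric space (X_G, ρ) is geodesic (every two points are joined by an isometric map of a real interval of length ρ(p,q)), and (X_G, ρ, ⪯) is a metric ∨-semilattice for the order ⪯ defined by (a,f) ⪯ (b,g) iff a ≤ b and f = g on (b, ∞). -/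
/-- A point of the tree `X_G`: a pair `(a, f)` with `a > 0`, `f : ℝ → G` vanishing on
`(-∞, a]`, eventually zero, and piecewise constant from the left on `(a, ∞)`. -/
structure TreePt (G : Type*) [AddGroup G] where
  a : ℝ
  f : ℝ → G
  a_pos : 0 < a
  f_zero : ∀ t : ℝ, t ≤ a → f t = 0
  f_ev : ∃ b : ℝ, ∀ t : ℝ, b ≤ t → f t = 0
  f_pcl : ∀ x : ℝ, a < x → ∃ ε > 0, ∀ s ∈ Set.Icc (x - ε) x ∩ Set.Ioi a, f s = f x

/-- `c(p,q) = max(a, b, inf {x | f = g on (x, ∞)})`. -/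
noncomputable def cval {G : Type*} [AddGroup G] (p q : TreePt G) : ℝ :=
  max (max p.a q.a) (sInf {x : ℝ | ∀ t : ℝ, x < t → p.f t = q.f t})

/-- The metric `ρ(p,q) = (c(p,q) - a) + (c(p,q) - b)` on `X_G`. -/
noncomputable def rho {G : Type*} [AddGroup G] (p q : TreePt G) : ℝ :=
  (cval p q - p.a) + (cval p q - q.a)

/-- The partial order: `(a,f) ⪯ (b,g)` iff `a ≤ b` and `f = g` on `(b, ∞)`. -/
def tle {G : Type*} [AddGroup G] (p q : TreePt G) : Prop :=
  p.a ≤ q.a ∧ ∀ t : ℝ, q.a < t → p.f t = q.f t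

section Aux

variable {G : Type*} [AddGroup G]

/-- The set of `x` such that `f = g` on `(x, ∞)`. -/
def eqSet (p q : TreePt G) : Set ℝ := {x : ℝ | ∀ t : ℝ, x < t → p.f t = q.f t}

lemma cval_def (p q : TreePt G) :
    cval p q = max (max p.a q.a) (sInf (eqSet p q)) := rfl

lemma eqSet_nonempty (p q : TreePt G) : (eqSet p q).Nonempty := by
  obtain ⟨b1, h1⟩ := p.f_ev
  obtain ⟨b2, h2⟩ := q.f_ev
  refine ⟨max b1 b2, fun t ht => ?_⟩
  rw [h1 t ((le_max_left _ _).trans ht.le), h2 t ((le_max_right _ _).trans ht.le)]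

lemma sInf_le_of_mem' {S : Set ℝ} {x : ℝ} (hx : x ∈ S) (h0 : 0 ≤ x) : sInf S ≤ x := by
  by_cases hb : BddBelow S
  · exact csInf_le hb hx
  · rw [Real.sInf_of_not_bddBelow hb]; exact h0

lemma a_le_cval (p q : TreePt G) : p.a ≤ cval p q :=
  (le_max_left _ _).trans (le_max_left _ _)

lemma b_le_cval (p q : TreePt G) : q.a ≤ cval p q :=
  (le_max_right _ _).trans (le_max_left _ _)

lemma cval_le {p q : TreePt G} {x : ℝ} (h1 : p.a ≤ x) (h2 : q.a ≤ x)
    (hx : x ∈ eqSet p q) : cval p q ≤ x :=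
  max_le (max_le h1 h2) (sInf_le_of_mem' hx (p.a_pos.le.trans h1))

lemma eq_of_cval_lt {p q : TreePt G} {t : ℝ} (h : cval p q < t) : p.f t = q.f t := by
  have h' : sInf (eqSet p q) < t := lt_of_le_of_lt (le_max_right _ _) h
  obtain ⟨x, hx, hxt⟩ := exists_lt_of_csInf_lt (eqSet_nonempty p q) h'
  exact hx t hxt

lemma cval_comm (p q : TreePt G) : cval p q = cval q p := by
  rw [cval_def, cval_def, max_comm p.a q.a]
  congr 2
  ext x
  exact ⟨fun h t ht => (h t ht).symm, fun h t ht => (h t ht).symm⟩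

lemma rho_comm (p q : TreePt G) : rho p q = rho q p := by
  unfold rho; rw [cval_comm]; ring

lemma TreePt.ext' {p q : TreePt G} (ha : p.a = q.a) (hf : p.f = q.f) : p = q := by
  cases p; cases q; simp_all

/-- Truncation of a point at level `x` (intended for `p.a ≤ x`). -/
noncomputable def trunc (p : TreePt G) (x : ℝ) : TreePt G where
  a := max p.a x
  f := fun t => if max p.a x < t then p.f t else 0
  a_pos := lt_of_lt_of_le p.a_pos (le_max_left _ _)
  f_zero := fun t ht => if_neg (not_lt.2 ht)
  f_ev := by
    obtain ⟨b, hb⟩ := p.f_ev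
    refine ⟨b, fun t ht => ?_⟩
    show (if max p.a x < t then p.f t else 0) = 0
    by_cases h : max p.a x < t
    · rw [if_pos h]; exact hb t ht
    · rw [if_neg h]
  f_pcl := by
    intro y hy
    obtain ⟨ε, hε, hconst⟩ := p.f_pcl y (lt_of_le_of_lt (le_max_left _ _) hy)
    refine ⟨ε, hε, fun s hs => ?_⟩
    have hs2 : max p.a x < s := hs.2
    have hfs : p.f s = p.f y := hconst s ⟨hs.1, lt_of_le_of_lt (le_max_left _ _) hs2⟩
    simp only [if_pos hs2, if_pos hy, hfs]

lemma trunc_a {p : TreePt G} {x : ℝ} (h : p.a ≤ x) : (trunc p x).a = x := max_eq_right h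

lemma trunc_f_gt {p : TreePt G} {x t : ℝ} (h : p.a ≤ x) (ht : x < t) :
    (trunc p x).f t = p.f t := if_pos (by rw [max_eq_right h]; exact ht)

lemma trunc_f_le {p : TreePt G} {x t : ℝ} (h : p.a ≤ x) (ht : t ≤ x) :
    (trunc p x).f t = 0 := if_neg (by rw [max_eq_right h]; exact not_lt.2 ht)

lemma trunc_self (p : TreePt G) : trunc p p.a = p := by
  refine TreePt.ext' (max_self _) (funext fun t => ?_)
  by_cases h : p.a < t
  · exact trunc_f_gt le_rfl h
  · rw [trunc_f_le le_rfl (not_lt.1 h)]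
    exact (p.f_zero t (not_lt.1 h)).symm

lemma cval_trunc_same {p : TreePt G} {x y : ℝ} (h1 : p.a ≤ x) (hxy : x ≤ y) :
    cval (trunc p x) (trunc p y) = y := by
  have h2 : p.a ≤ y := h1.trans hxy
  refine le_antisymm (cval_le ((trunc_a h1).trans_le hxy) (trunc_a h2).le ?_) ?_
  · intro t ht
    rw [trunc_f_gt h1 (lt_of_le_of_lt hxy ht), trunc_f_gt h2 ht]
  · calc y = (trunc p y).a := (trunc_a h2).symm
    _ ≤ _ := b_le_cval _ _

lemma rho_trunc_same {p : TreePt G} {x y : ℝ} (h1 : p.a ≤ x) (hxy : x ≤ y) :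
    rho (trunc p x) (trunc p y) = y - x := by
  unfold rho
  rw [cval_trunc_same h1 hxy, trunc_a h1, trunc_a (h1.trans hxy)]
  ring

lemma cval_trunc_cross {p q : TreePt G} {x y : ℝ} (hx : p.a ≤ x) (hxc : x ≤ cval p q)
    (hy : q.a ≤ y) (hyc : y ≤ cval p q) :
    cval (trunc p x) (trunc q y) = cval p q := by
  set c := cval p q with hc
  have hmemc : c ∈ eqSet (trunc p x) (trunc q y) := by
    intro t ht
    rw [trunc_f_gt hx (lt_of_le_of_lt hxc ht), trunc_f_gt hy (lt_of_le_of_lt hyc ht)]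
    exact eq_of_cval_lt ht
  refine le_antisymm (cval_le ((trunc_a hx).trans_le hxc) ((trunc_a hy).trans_le hyc) hmemc) ?_
  rcases eq_or_lt_of_le hxc with hxe | hxlt
  · calc c = x := hxe.symm
    _ = (trunc p x).a := (trunc_a hx).symm
    _ ≤ _ := a_le_cval _ _
  rcases eq_or_lt_of_le hyc with hye | hylt
  · calc c = y := hye.symm
    _ = (trunc q y).a := (trunc_a hy).symm
    _ ≤ _ := b_le_cval _ _
  -- now x < c and y < c, hence p.a < c and q.a < c, so c = sInf (eqSet p q)
  have hac : p.a < c := lt_of_le_of_lt hx hxlt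
  have hbc : q.a < c := lt_of_le_of_lt hy hylt
  have hmab : max p.a q.a < c := max_lt hac hbc
  have hcm : c = sInf (eqSet p q) := by
    rcases max_cases (max p.a q.a) (sInf (eqSet p q)) with ⟨h, _⟩ | ⟨h, _⟩
    · rw [cval_def] at hc; rw [hc] at hmab; exact absurd (hc.trans h) hmab.ne'
    · rw [cval_def] at hc; exact hc.trans h
  have hbdd : BddBelow (eqSet p q) := by
    by_contra hb
    rw [Real.sInf_of_not_bddBelow hb] at hcm
    exact absurd (hcm ▸ p.a_pos) (not_lt.2 hac.le)
  -- show c is a lower bound of eqSet (trunc p x) (trunc q y)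
  have hlb : ∀ z ∈ eqSet (trunc p x) (trunc q y), c ≤ z := by
    intro z hz
    by_contra hzc
    push_neg at hzc
    set z' := max z (max x y) with hz'
    have hz'c : z' < c := max_lt hzc (max_lt hxlt hylt)
    have hz'notin : z' ∉ eqSet p q := fun hin => absurd (hcm ▸ csInf_le hbdd hin) (not_le.2 hz'c)
    simp only [eqSet, Set.mem_setOf_eq, not_forall] at hz'notin
    obtain ⟨t, ht, hne⟩ := hz'notin
    have htc : t ≤ c := by
      by_contra h
      exact hne (eq_of_cval_lt (not_le.1 h))
    have hxt : x < t := lt_of_le_of_lt ((le_max_left x y).trans (le_max_right _ _)) ht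
    have hyt : y < t := lt_of_le_of_lt ((le_max_right x y).trans (le_max_right _ _)) ht
    have hzt : z < t := lt_of_le_of_lt (le_max_left _ _) ht
    have := hz t hzt
    rw [trunc_f_gt hx hxt, trunc_f_gt hy hyt] at this
    exact hne this
  calc c ≤ sInf (eqSet (trunc p x) (trunc q y)) := le_csInf ⟨c, hmemc⟩ hlb
  _ ≤ _ := le_max_right _ _

lemma rho_trunc_cross {p q : TreePt G} {x y : ℝ} (hx : p.a ≤ x) (hxc : x ≤ cval p q)
    (hy : q.a ≤ y) (hyc : y ≤ cval p q) :
    rho (trunc p x) (trunc q y) = (cval p q - x) + (cval p q - y) := by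
  unfold rho
  rw [cval_trunc_cross hx hxc hy hyc, trunc_a hx, trunc_a hy]

lemma cval_of_tle {p q : TreePt G} (h : tle p q) : cval p q = q.a :=
  le_antisymm (cval_le h.1 le_rfl h.2) (b_le_cval p q)

lemma rho_of_tle {p q : TreePt G} (h : tle p q) : rho p q = q.a - p.a := by
  unfold rho; rw [cval_of_tle h]; ring

lemma tle_trans {p q r : TreePt G} (h1 : tle p q) (h2 : tle q r) : tle p r :=
  ⟨h1.1.trans h2.1, fun t ht => (h1.2 t (lt_of_le_of_lt h2.1 ht)).trans (h2.2 t ht)⟩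

lemma rho_nonneg_parts (p q : TreePt G) :
    0 ≤ cval p q - p.a ∧ 0 ≤ cval p q - q.a :=
  ⟨sub_nonneg.2 (a_le_cval p q), sub_nonneg.2 (b_le_cval p q)⟩

lemma rho_nonneg (p q : TreePt G) : 0 ≤ rho p q := by
  have h := rho_nonneg_parts p q
  unfold rho; linarith [h.1, h.2]

/-- The geodesic from `p` to `q`. -/
noncomputable def geo (p q : TreePt G) (s : ℝ) : TreePt G :=
  if max 0 (min s (rho p q)) ≤ cval p q - p.a then
    trunc p (p.a + max 0 (min s (rho p q)))
  else trunc q (2 * cval p q - p.a - max 0 (min s (rho p q)))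

lemma geo_eq_of_mem {p q : TreePt G} {s : ℝ} (h0 : 0 ≤ s) (h1 : s ≤ rho p q) :
    geo p q s = if s ≤ cval p q - p.a then trunc p (p.a + s)
      else trunc q (2 * cval p q - p.a - s) := by
  unfold geo
  rw [min_eq_left h1, max_eq_right h0]

lemma trunc_eq_q {p q : TreePt G} (hcb : cval p q = q.a) : trunc p q.a = q := by
  have hab : p.a ≤ q.a := hcb ▸ a_le_cval p q
  refine TreePt.ext' (trunc_a hab) (funext fun t => ?_)
  by_cases h : q.a < t
  · rw [trunc_f_gt hab h]
    exact eq_of_cval_lt (hcb ▸ h)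
  · rw [trunc_f_le hab (not_lt.1 h)]
    exact (q.f_zero t (not_lt.1 h)).symm

lemma geo_zero (p q : TreePt G) : geo p q 0 = p := by
  rw [geo_eq_of_mem le_rfl (rho_nonneg p q),
    if_pos (sub_nonneg.2 (a_le_cval p q)), add_zero, trunc_self]

lemma geo_rho (p q : TreePt G) : geo p q (rho p q) = q := by
  rw [geo_eq_of_mem (rho_nonneg p q) le_rfl]
  by_cases h : rho p q ≤ cval p q - p.a
  · rw [if_pos h]
    have hcb : cval p q = q.a := by
      have := rho_nonneg_parts p q
      unfold rho at h
      have : cval p q ≤ q.a := by linarith [this.2]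
      exact le_antisymm this (b_le_cval p q)
    have : p.a + rho p q = q.a := by unfold rho; rw [hcb]; ring
    rw [this, trunc_eq_q hcb]
  · rw [if_neg h]
    have : 2 * cval p q - p.a - rho p q = q.a := by unfold rho; ring
    rw [this, trunc_self]

lemma geo_dist_le {p q : TreePt G} {s t : ℝ} (hs0 : 0 ≤ s) (hs1 : s ≤ rho p q)
    (ht0 : 0 ≤ t) (ht1 : t ≤ rho p q) (hst : s ≤ t) :
    rho (geo p q s) (geo p q t) = t - s := by
  have hrho : rho p q = (cval p q - p.a) + (cval p q - q.a) := rfl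
  rw [geo_eq_of_mem hs0 hs1, geo_eq_of_mem ht0 ht1]
  by_cases h1 : s ≤ cval p q - p.a <;> by_cases h2 : t ≤ cval p q - p.a
  · rw [if_pos h1, if_pos h2,
      rho_trunc_same (le_add_of_nonneg_right hs0) (by linarith)]
    ring
  · rw [if_pos h1, if_neg h2,
      rho_trunc_cross (le_add_of_nonneg_right hs0) (by linarith)
        (by linarith) (by push_neg at h2; linarith)]
    ring
  · exact absurd (hst.trans h2) h1
  · rw [if_neg h1, if_neg h2, rho_comm,
      rho_trunc_same (p := q) (by linarith) (by linarith)]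
    ring

end Aux

/-- `ρ` is a metric on `X_G`, the space `(X_G, ρ)` is geodesic, and
`(X_G, ρ, ⪯)` is a metric ∨-semilattice. -/
theorem stmt12 {G : Type*} [AddGroup G] [Nontrivial G] :
    (∀ p q : TreePt G, rho p q = 0 ↔ p = q) ∧
    (∀ p q : TreePt G, rho p q = rho q p) ∧
    (∀ p q r : TreePt G, rho p r ≤ rho p q + rho q r) ∧
    (∀ p q : TreePt G, ∃ γ : ℝ → TreePt G, γ 0 = p ∧ γ (rho p q) = q ∧
      ∀ s ∈ Set.Icc (0:ℝ) (rho p q), ∀ t ∈ Set.Icc (0:ℝ) (rho p q),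
        rho (γ s) (γ t) = |s - t|) ∧
    (∀ p z q : TreePt G, tle p z → tle z q → rho p z + rho z q = rho p q) ∧
    (∀ p q : TreePt G, ∃ w : TreePt G, tle p w ∧ tle q w ∧
      (∀ r : TreePt G, tle p r → tle q r → tle w r) ∧
      rho p q = rho p w + rho w q) := by
  refine ⟨?_, rho_comm, ?_, ?_, ?_, ?_⟩
  · -- rho p q = 0 ↔ p = q
    intro p q
    constructor
    · intro h
      have h1 := (rho_nonneg_parts p q).1
      have h2 := (rho_nonneg_parts p q).2
      unfold rho at h
      have hca : cval p q = p.a := by linarith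
      have hcb : cval p q = q.a := by linarith
      refine TreePt.ext' (hca ▸ hcb) (funext fun t => ?_)
      by_cases ht : cval p q < t
      · exact eq_of_cval_lt ht
      · rw [p.f_zero t (hca ▸ not_lt.1 ht), q.f_zero t (hcb ▸ not_lt.1 ht)]
    · rintro rfl
      have hc : cval p p = p.a :=
        le_antisymm (cval_le le_rfl le_rfl (fun t _ => rfl)) (a_le_cval p p)
      unfold rho; rw [hc]; ring
  · -- triangle inequality
    intro p q r
    have hMem : max (cval p q) (cval q r) ∈ eqSet p r := by
      intro t ht
      have h1 : cval p q < t := lt_of_le_of_lt (le_max_left _ _) ht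
      have h2 : cval q r < t := lt_of_le_of_lt (le_max_right _ _) ht
      exact (eq_of_cval_lt h1).trans (eq_of_cval_lt h2)
    have hle : cval p r ≤ max (cval p q) (cval q r) :=
      cval_le ((a_le_cval p q).trans (le_max_left _ _))
        ((b_le_cval q r).trans (le_max_right _ _)) hMem
    have h1 := a_le_cval p q
    have h2 := b_le_cval p q
    have h3 := a_le_cval q r
    have h4 := b_le_cval q r
    unfold rho
    rcases le_total (cval p q) (cval q r) with h | h
    · rw [max_eq_right h] at hle; linarith
    · rw [max_eq_left h] at hle; linarith
  · -- geodesic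
    intro p q
    refine ⟨geo p q, geo_zero p q, geo_rho p q, fun s hs t ht => ?_⟩
    rcases le_total s t with h | h
    · rw [geo_dist_le hs.1 hs.2 ht.1 ht.2 h, abs_of_nonpos (by linarith), neg_sub]
    · rw [rho_comm, geo_dist_le ht.1 ht.2 hs.1 hs.2 h, abs_of_nonneg (by linarith)]
  · -- betweenness for tle
    intro p z q h1 h2
    rw [rho_of_tle h1, rho_of_tle h2, rho_of_tle (tle_trans h1 h2)]
    ring
  · -- join
    intro p q
    set c := cval p q with hc
    have hac : p.a ≤ c := a_le_cval p q
    have hbc : q.a ≤ c := b_le_cval p q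
    have hwa : (trunc p c).a = c := trunc_a hac
    have hpw : tle p (trunc p c) := by
      refine ⟨by rw [hwa]; exact hac, fun t ht => ?_⟩
      rw [hwa] at ht
      exact (trunc_f_gt hac ht).symm
    have hqw : tle q (trunc p c) := by
      refine ⟨by rw [hwa]; exact hbc, fun t ht => ?_⟩
      rw [hwa] at ht
      rw [trunc_f_gt hac ht]
      exact (eq_of_cval_lt ht).symm
    refine ⟨trunc p c, hpw, hqw, fun r hpr hqr => ?_, ?_⟩
    · have hmem : r.a ∈ eqSet p q := fun t ht => (hpr.2 t ht).trans (hqr.2 t ht).symm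
      have hcr : c ≤ r.a := cval_le hpr.1 hqr.1 hmem
      refine ⟨by rw [hwa]; exact hcr, fun t ht => ?_⟩
      rw [trunc_f_gt hac (lt_of_le_of_lt hcr ht)]
      exact hpr.2 t ht
    · rw [rho_of_tle hpw, rho_comm (trunc p c) q, rho_of_tle hqw, hwa]
      unfold rho
      ring
end

section
/- Let G be a nontrivial additive group and let (X_G, ρ) be the metric space of pairs (a, f), a > 0, f : ℝ → G with f = 0 on (−∞, a], f eventually 0, f piecewise constant from the left on (a, ∞), with metric ρ(p,q) = (c(p,q) − a) + (c(p,q) − b) where c(p,q) = max(a, b, inf{x : f = g on (x, ∞)}). Then the map φ : X_G → (0, ∞), φ(a, f) = a, is a submetry onto (0, ∞) with its standard metric: for every p = (a,f) ∈ X_G and every r ≥ 0, the image of the closed ball {q ∈ X_G : ρ(p,q) ≤ r} under φ equals {b ∈ (0, ∞) : |b − a| ≤ r}. -/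
/-- The map `(a, f) ↦ a` is a submetry of `X_G` onto `(0, ∞)`: the image of every
closed ball equals the closed ball of the same radius in `(0, ∞)`. -/
theorem stmt15 {G : Type*} [AddGroup G] [Nontrivial G] (p : TreePt G) (r : ℝ) (hr : 0 ≤ r) :
    (fun q : TreePt G => q.a) '' {q : TreePt G | rho p q ≤ r} =
      {b : ℝ | 0 < b ∧ |b - p.a| ≤ r} := by
  ext b
  simp only [Set.mem_image, Set.mem_setOf_eq]
  constructor
  · rintro ⟨q, hq, rfl⟩
    have h1 : p.a ≤ cval p q := le_trans (le_max_left _ _) (le_max_left _ _)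
    have h2 : q.a ≤ cval p q := le_trans (le_max_right _ _) (le_max_left _ _)
    refine ⟨q.a_pos, ?_⟩
    rw [abs_sub_le_iff]
    unfold rho at hq
    constructor <;> linarith
  · rintro ⟨hb, hbr⟩
    set g : ℝ → G := fun t => if b < t then p.f t else 0 with hg
    have hpcl : ∀ x : ℝ, b < x → ∃ ε > 0, ∀ s ∈ Set.Icc (x - ε) x ∩ Set.Ioi b,
        g s = g x := by
      intro x hx
      by_cases hxa : p.a < x
      · obtain ⟨ε, hε, hεc⟩ := p.f_pcl x hxa
        refine ⟨min ε ((x - p.a) / 2), lt_min hε (by linarith), ?_⟩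
        rintro s ⟨⟨hs1, hs2⟩, hs3⟩
        have hmε : min ε ((x - p.a) / 2) ≤ ε := min_le_left _ _
        have hm2 : min ε ((x - p.a) / 2) ≤ (x - p.a) / 2 := min_le_right _ _
        have hsa : p.a < s := by linarith
        have hsb : b < s := hs3
        simp only [hg, if_pos hsb, if_pos hx]
        exact hεc s ⟨⟨by linarith, hs2⟩, hsa⟩
      · push_neg at hxa
        refine ⟨1, one_pos, ?_⟩
        rintro s ⟨⟨hs1, hs2⟩, hs3⟩
        have hsb : b < s := hs3
        simp only [hg, if_pos hsb, if_pos hx]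
        rw [p.f_zero s (le_trans hs2 hxa), p.f_zero x hxa]
    have hev : ∃ b0 : ℝ, ∀ t : ℝ, b0 ≤ t → g t = 0 := by
      obtain ⟨b0, hb0⟩ := p.f_ev
      exact ⟨b0, fun t ht => by simp only [hg]; split <;> simp [hb0 t ht]⟩
    set q : TreePt G := ⟨b, g, hb, fun t ht => if_neg (not_lt.2 ht), hev, hpcl⟩ with hq
    refine ⟨q, ?_, rfl⟩
    · -- compute rho
      show rho p q ≤ r
      have hcval : cval p q = max p.a b := by
        unfold cval
        refine max_eq_left ?_
        have hmem : max p.a b ∈ {x : ℝ | ∀ t : ℝ, x < t → p.f t = g t} := by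
          intro t ht
          have : b < t := lt_of_le_of_lt (le_max_right _ _) ht
          simp [hg, this]
        by_cases hbd : BddBelow {x : ℝ | ∀ t : ℝ, x < t → p.f t = g t}
        · exact csInf_le hbd hmem
        · rw [Real.sInf_of_not_bddBelow hbd]
          exact le_trans (le_of_lt p.a_pos) (le_max_left _ _)
      unfold rho
      rw [hcval]
      rw [abs_sub_le_iff] at hbr
      rcases le_total p.a b with h | h
      · rw [max_eq_right h]; linarith [hbr.1]
      · rw [max_eq_left h]; linarith [hbr.2]
end

section
/- Let G be a nontrivial additive group and let (X_G, ρ) be the metric space of pairs (a, f), a > 0, f : ℝ → G with f = 0 on (−∞, a], f eventually 0, f piecewise constant from the left on (a, ∞), with metric ρ(p,q) = (c(p,q) − a) + (c(p,q) − b) where c(p,q) = max(a, b, inf{x : f = g on (x, ∞)}). Then X_G is similarity homogeneous but not homogeneous: for every p, q ∈ X_G there exist λ > 0 and a bijection S : X_G → X_G with ρ(S u, S v) = λ · ρ(u, v) for all u, v ∈ X_G and S p = q; but there exist points p, q ∈ X_G such that no bijection S : X_G → X_G satisfying ρ(S u, S v) = ρ(u, v) for all u, v maps p to q. -/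
namespace Stmt17
open Set Pointwise

variable {G : Type*} [AddGroup G]

lemma TreePt.ext' {p q : TreePt G} (h1 : p.a = q.a) (h2 : p.f = q.f) : p = q := by
  cases p; cases q
  simp only at h1 h2
  subst h1; subst h2; rfl

def aset (p q : TreePt G) : Set ℝ := {x : ℝ | ∀ t : ℝ, x < t → p.f t = q.f t}

lemma cval_def (p q : TreePt G) : cval p q = max (max p.a q.a) (sInf (aset p q)) := rfl

lemma aset_nonempty (p q : TreePt G) : (aset p q).Nonempty := by
  obtain ⟨b1, h1⟩ := p.f_ev
  obtain ⟨b2, h2⟩ := q.f_ev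
  refine ⟨max b1 b2, fun t ht => ?_⟩
  rw [h1 t (le_of_lt (lt_of_le_of_lt (le_max_left _ _) ht)),
      h2 t (le_of_lt (lt_of_le_of_lt (le_max_right _ _) ht))]

lemma aset_upward {p q : TreePt G} {x y : ℝ} (h : x ∈ aset p q) (hxy : x ≤ y) :
    y ∈ aset p q := fun t ht => h t (lt_of_le_of_lt hxy ht)

lemma left_le_cval (p q : TreePt G) : p.a ≤ cval p q :=
  le_trans (le_max_left _ _) (le_max_left _ _)

lemma right_le_cval (p q : TreePt G) : q.a ≤ cval p q :=
  le_trans (le_max_right _ _) (le_max_left _ _)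

lemma agree_above (p q : TreePt G) {t : ℝ} (ht : cval p q < t) : p.f t = q.f t := by
  have h1 : sInf (aset p q) < t := lt_of_le_of_lt (le_max_right _ _) ht
  obtain ⟨y, hy, hyt⟩ := exists_lt_of_csInf_lt (aset_nonempty p q) h1
  exact hy t hyt

lemma cval_le (p q : TreePt G) {x : ℝ} (hx : x ∈ aset p q) :
    cval p q ≤ max (max p.a q.a) x := by
  rw [cval_def]
  by_cases hb : BddBelow (aset p q)
  · exact max_le_max le_rfl (csInf_le hb hx)
  · rw [Real.sInf_of_not_bddBelow hb]
    exact max_le (le_max_left _ _)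
      (le_trans (le_trans p.a_pos.le (le_max_left _ _)) (le_max_left _ _))

lemma rho_nonneg (p q : TreePt G) : 0 ≤ rho p q := by
  have h1 := left_le_cval p q
  have h2 := right_le_cval p q
  unfold rho; linarith

lemma rho_lower_left (p q : TreePt G) : q.a - p.a ≤ rho p q := by
  have h1 := left_le_cval p q
  have h2 := right_le_cval p q
  unfold rho; linarith

lemma rho_lower_right (p q : TreePt G) : p.a - q.a ≤ rho p q := by
  have h1 := left_le_cval p q
  have h2 := right_le_cval p q
  unfold rho; linarith

lemma cval_eq_rho (p q : TreePt G) : cval p q = (rho p q + p.a + q.a) / 2 := by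
  unfold rho; ring

/-- a TreePt function is locally constant from the left at EVERY point. -/
lemma lconst (p : TreePt G) (y : ℝ) :
    ∃ ε > 0, ∀ s : ℝ, y - ε ≤ s → s ≤ y → p.f s = p.f y := by
  by_cases hy : y ≤ p.a
  · exact ⟨1, one_pos, fun s _ hs => by rw [p.f_zero s (hs.trans hy), p.f_zero y hy]⟩
  · push_neg at hy
    obtain ⟨ε, hε, h⟩ := p.f_pcl y hy
    refine ⟨min ε ((y - p.a) / 2), lt_min hε (by linarith), fun s h1 h2 => ?_⟩
    have hm1 := min_le_left ε ((y - p.a) / 2)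
    have hm2 := min_le_right ε ((y - p.a) / 2)
    have hs1 : y - ε ≤ s := by linarith
    have hs2 : p.a < s := by linarith
    exact h s ⟨⟨hs1, h2⟩, hs2⟩

/-- key comparison lemma for max-with-sInf. -/
lemma max_sInf_le {m : ℝ} (hm : 0 < m) {A A' : Set ℝ} (hA' : A'.Nonempty)
    (hup' : ∀ {x y : ℝ}, x ∈ A' → x ≤ y → y ∈ A')
    (himp : ∀ x : ℝ, m ≤ x → x ∈ A' → x ∈ A) :
    max m (sInf A) ≤ max m (sInf A') := by
  by_cases hb : BddBelow A
  · refine max_le (le_max_left _ _) ?_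
    have key : ∀ ε : ℝ, 0 < ε → sInf A ≤ max m (sInf A') + ε := by
      intro ε hε
      set R := max m (sInf A') with hR
      have h1 : ∃ y ∈ A', y < R + ε := by
        by_cases hb' : BddBelow A'
        · exact exists_lt_of_csInf_lt hA'
            (lt_of_le_of_lt (le_max_right _ _) (lt_add_of_pos_right _ hε))
        · obtain ⟨y, hy, hlt⟩ := not_bddBelow_iff.mp hb' (R + ε)
          exact ⟨y, hy, hlt⟩
      obtain ⟨y, hy, hlt⟩ := h1
      have hRA' : R + ε ∈ A' := hup' hy hlt.le
      have hRA : R + ε ∈ A := himp _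
        (le_trans (le_max_left _ _) (le_add_of_nonneg_right hε.le)) hRA'
      exact csInf_le hb hRA
    exact le_trans (le_of_forall_pos_le_add key) le_rfl
  · rw [Real.sInf_of_not_bddBelow hb, max_eq_left hm.le]
    exact le_max_left _ _

lemma cval_congr {p q p' q' : TreePt G} (hpa : p'.a = p.a) (hqa : q'.a = q.a)
    (hiff : ∀ x : ℝ, max p.a q.a ≤ x → (x ∈ aset p q ↔ x ∈ aset p' q')) :
    cval p' q' = cval p q := by
  have hm : (0:ℝ) < max p.a q.a := lt_of_lt_of_le p.a_pos (le_max_left _ _)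
  rw [cval_def, cval_def, hpa, hqa]
  refine le_antisymm ?_ ?_
  · exact max_sInf_le hm (aset_nonempty p q)
      (fun h hl => aset_upward h hl)
      (fun x hx h => (hiff x hx).mp h)
  · exact max_sInf_le hm (aset_nonempty p' q')
      (fun h hl => aset_upward h hl)
      (fun x hx h => (hiff x hx).mpr h)

/-! ### Scaling similarity -/

noncomputable def scl (l : ℝ) (hl : 0 < l) (p : TreePt G) : TreePt G where
  a := l * p.a
  f := fun t => p.f (t / l)
  a_pos := mul_pos hl p.a_pos
  f_zero := fun t ht => p.f_zero _ (by rw [div_le_iff₀ hl]; linarith [mul_comm l p.a])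
  f_ev := by
    obtain ⟨b, hb⟩ := p.f_ev
    exact ⟨l * b, fun t ht => hb _ (by rw [le_div_iff₀ hl]; linarith [mul_comm l b])⟩
  f_pcl := by
    intro x hx
    obtain ⟨ε, hε, h⟩ := lconst p (x / l)
    refine ⟨l * ε, mul_pos hl hε, fun s hs => ?_⟩
    obtain ⟨⟨hs1, hs2⟩, _⟩ := hs
    refine h (s / l) ?_ ((div_le_div_iff_of_pos_right hl).mpr hs2)
    have h1 : (x - l * ε) / l ≤ s / l := (div_le_div_iff_of_pos_right hl).mpr hs1
    rwa [sub_div, mul_div_cancel_left₀ ε hl.ne'] at h1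

lemma scl_a (l : ℝ) (hl : 0 < l) (p : TreePt G) : (scl l hl p).a = l * p.a := rfl

lemma aset_scl (l : ℝ) (hl : 0 < l) (u v : TreePt G) :
    aset (scl l hl u) (scl l hl v) = l • (aset u v) := by
  ext x
  simp only [Set.mem_smul_set, smul_eq_mul, aset, Set.mem_setOf_eq]
  constructor
  · intro h
    refine ⟨x / l, fun t ht => ?_, mul_div_cancel₀ x hl.ne'⟩
    have hx : x < t * l := (div_lt_iff₀ hl).mp ht
    have h2 : u.f (t * l / l) = v.f (t * l / l) := h (t * l) hx
    rwa [mul_div_cancel_right₀ t hl.ne'] at h2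
  · rintro ⟨y, hy, rfl⟩ t ht
    have hyt : y < t / l := (lt_div_iff₀ hl).mpr (by rw [mul_comm]; exact ht)
    exact hy (t / l) hyt

lemma cval_scl (l : ℝ) (hl : 0 < l) (u v : TreePt G) :
    cval (scl l hl u) (scl l hl v) = l * cval u v := by
  rw [cval_def, cval_def, aset_scl l hl u v, Real.sInf_smul_of_nonneg hl.le, smul_eq_mul,
    scl_a, scl_a, ← mul_max_of_nonneg _ _ hl.le, ← mul_max_of_nonneg _ _ hl.le]

lemma rho_scl (l : ℝ) (hl : 0 < l) (u v : TreePt G) :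
    rho (scl l hl u) (scl l hl v) = l * rho u v := by
  unfold rho
  rw [cval_scl l hl u v, scl_a, scl_a]; ring

lemma scl_scl (l l' : ℝ) (hl : 0 < l) (hl' : 0 < l') (p : TreePt G)
    (h : l' * l = 1) : scl l' hl' (scl l hl p) = p := by
  refine TreePt.ext' ?_ (funext fun t => ?_)
  · show l' * (l * p.a) = p.a
    rw [← mul_assoc, h, one_mul]
  · show p.f (t / l' / l) = p.f t
    rw [div_div, h, div_one]

lemma scl_bijective (l : ℝ) (hl : 0 < l) :
    Function.Bijective (scl l hl : TreePt G → TreePt G) := by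
  have hl' : 0 < l⁻¹ := inv_pos.mpr hl
  have h1 : l⁻¹ * l = 1 := inv_mul_cancel₀ hl.ne'
  have h2 : l * l⁻¹ = 1 := mul_inv_cancel₀ hl.ne'
  exact ⟨Function.LeftInverse.injective (g := scl l⁻¹ hl') (fun p => scl_scl l l⁻¹ hl hl' p h1),
    Function.RightInverse.surjective (g := scl l⁻¹ hl') (fun p => scl_scl l⁻¹ l hl' hl p h2)⟩

/-! ### Branch-translation isometry -/

noncomputable def trl (P Q : TreePt G) (p : TreePt G) : TreePt G where
  a := p.a
  f := fun t => if p.a < t then p.f t + (-P.f t + Q.f t) else 0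
  a_pos := p.a_pos
  f_zero := fun t ht => if_neg (not_lt.mpr ht)
  f_ev := by
    obtain ⟨b1, h1⟩ := p.f_ev
    obtain ⟨b2, h2⟩ := P.f_ev
    obtain ⟨b3, h3⟩ := Q.f_ev
    refine ⟨max (max b1 b2) b3, fun t ht => ?_⟩
    show (if p.a < t then p.f t + (-P.f t + Q.f t) else 0) = 0
    by_cases h : p.a < t
    · rw [if_pos h, h1 t (le_trans (le_trans (le_max_left _ _) (le_max_left _ _)) ht),
        h2 t (le_trans (le_trans (le_max_right _ _) (le_max_left _ _)) ht),
        h3 t (le_trans (le_max_right _ _) ht)]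
      simp
    · exact if_neg h
  f_pcl := by
    intro x hx
    obtain ⟨e1, he1, g1⟩ := lconst p x
    obtain ⟨e2, he2, g2⟩ := lconst P x
    obtain ⟨e3, he3, g3⟩ := lconst Q x
    refine ⟨min (min e1 e2) e3, by positivity, ?_⟩
    rintro s ⟨⟨hs1, hs2⟩, hs3⟩
    have hmin1 : min (min e1 e2) e3 ≤ e1 := le_trans (min_le_left _ _) (min_le_left _ _)
    have hmin2 : min (min e1 e2) e3 ≤ e2 := le_trans (min_le_left _ _) (min_le_right _ _)
    have hmin3 : min (min e1 e2) e3 ≤ e3 := min_le_right _ _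
    show (if p.a < s then p.f s + (-P.f s + Q.f s) else 0)
        = (if p.a < x then p.f x + (-P.f x + Q.f x) else 0)
    rw [if_pos (Set.mem_Ioi.mp hs3), if_pos hx,
      g1 s (by linarith) hs2, g2 s (by linarith) hs2, g3 s (by linarith) hs2]

lemma trl_a (P Q p : TreePt G) : (trl P Q p).a = p.a := rfl

lemma cval_trl (P Q u v : TreePt G) : cval (trl P Q u) (trl P Q v) = cval u v := by
  refine cval_congr rfl rfl (fun x hx => ?_)
  have hu : u.a ≤ x := le_trans (le_max_left _ _) hx
  have hv : v.a ≤ x := le_trans (le_max_right _ _) hx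
  constructor
  · intro h t ht
    show (if u.a < t then _ else _) = (if v.a < t then _ else _)
    rw [if_pos (lt_of_le_of_lt hu ht), if_pos (lt_of_le_of_lt hv ht), h t ht]
  · intro h t ht
    have h2 := h t ht
    rw [show (trl P Q u).f t = if u.a < t then u.f t + (-P.f t + Q.f t) else 0 from rfl,
      show (trl P Q v).f t = if v.a < t then v.f t + (-P.f t + Q.f t) else 0 from rfl,
      if_pos (lt_of_le_of_lt hu ht), if_pos (lt_of_le_of_lt hv ht)] at h2
    exact add_right_cancel h2

lemma rho_trl (P Q u v : TreePt G) : rho (trl P Q u) (trl P Q v) = rho u v := by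
  unfold rho
  rw [cval_trl, trl_a, trl_a]

lemma trl_trl (P Q p : TreePt G) : trl Q P (trl P Q p) = p := by
  refine TreePt.ext' rfl (funext fun t => ?_)
  show (if (trl P Q p).a < t then (trl P Q p).f t + (-Q.f t + P.f t) else 0) = p.f t
  rw [trl_a]
  by_cases h : p.a < t
  · rw [if_pos h, show (trl P Q p).f t = if p.a < t then p.f t + (-P.f t + Q.f t) else 0 from rfl,
      if_pos h, add_assoc, add_assoc, add_neg_cancel_left, neg_add_cancel, add_zero]
  · rw [if_neg h, (p.f_zero t (not_lt.mp h))]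

lemma trl_bijective (P Q : TreePt G) : Function.Bijective (trl P Q : TreePt G → TreePt G) :=
  ⟨Function.LeftInverse.injective (g := trl Q P) (fun p => trl_trl P Q p),
   Function.RightInverse.surjective (g := trl Q P) (fun p => trl_trl Q P p)⟩

lemma trl_self (P Q : TreePt G) (ha : P.a = Q.a) : trl P Q P = Q := by
  refine TreePt.ext' ha (funext fun t => ?_)
  show (if P.a < t then P.f t + (-P.f t + Q.f t) else 0) = Q.f t
  by_cases h : P.a < t
  · rw [if_pos h, add_neg_cancel_left]
  · rw [if_neg h, (Q.f_zero t (by rw [← ha]; exact not_lt.mp h))]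

theorem part1 (p q : TreePt G) : ∃ (k : ℝ) (S : TreePt G → TreePt G), 0 < k ∧
    Function.Bijective S ∧ (∀ u v : TreePt G, rho (S u) (S v) = k * rho u v) ∧
    S p = q := by
  have hl : 0 < q.a / p.a := div_pos q.a_pos p.a_pos
  set P := scl (q.a / p.a) hl p with hP
  refine ⟨q.a / p.a, fun u => trl P q (scl (q.a / p.a) hl u), hl,
    (trl_bijective P q).comp (scl_bijective _ hl), fun u v => ?_, ?_⟩
  · rw [rho_trl, rho_scl]
  · show trl P q P = q
    exact trl_self P q (by rw [hP, scl_a, div_mul_cancel₀ q.a p.a_pos.ne'])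


/-! ### Part 2: not homogeneous -/

def zeroPt (x : ℝ) (hx : 0 < x) : TreePt G where
  a := x
  f := fun _ => 0
  a_pos := hx
  f_zero := fun _ _ => rfl
  f_ev := ⟨0, fun _ _ => rfl⟩
  f_pcl := fun _ _ => ⟨1, one_pos, fun _ _ => rfl⟩

lemma cval_same_f (p q : TreePt G) (h : p.f = q.f) : cval p q = max p.a q.a := by
  have hA : aset p q = Set.univ := eq_univ_of_forall (fun x t _ => by rw [h])
  rw [cval_def, hA]
  have hnb : ¬ BddBelow (Set.univ : Set ℝ) := by
    rintro ⟨b, hb⟩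
    have := hb (Set.mem_univ (b - 1))
    linarith
  rw [Real.sInf_of_not_bddBelow hnb, max_eq_left]
  exact le_trans p.a_pos.le (le_max_left _ _)

lemma rho_zeroPt (x y : ℝ) (hx : 0 < x) (hy : 0 < y) :
    rho (zeroPt x hx : TreePt G) (zeroPt y hy) = |x - y| := by
  unfold rho
  rw [cval_same_f (zeroPt x hx) (zeroPt y hy) rfl]
  show (max x y - x) + (max x y - y) = |x - y|
  rcases le_total x y with h | h
  · rw [max_eq_right h, abs_of_nonpos (by linarith)]; ring
  · rw [max_eq_left h, abs_of_nonneg (by linarith)]; ring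

lemma cauchy_limit (y : ℕ → TreePt G)
    (hC : ∀ ε : ℝ, 0 < ε → ∃ N, ∀ n m, N ≤ n → N ≤ m → rho (y n) (y m) < ε)
    (hb : ∀ n, 1 ≤ (y n).a) :
    ∃ z : TreePt G, ∀ ε : ℝ, 0 < ε → ∃ N, ∀ n, N ≤ n → rho (y n) z < ε := by
  classical
  have hcauchy : CauchySeq (fun n => (y n).a) := by
    rw [Metric.cauchySeq_iff]
    intro ε hε
    obtain ⟨N, hN⟩ := hC ε hε
    refine ⟨N, fun m hm n hn => ?_⟩
    have h1 := rho_lower_left (y m) (y n)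
    have h2 := rho_lower_right (y m) (y n)
    have h3 := hN m n hm hn
    rw [Real.dist_eq, abs_sub_lt_iff]
    constructor <;> linarith
  obtain ⟨κ, hκ⟩ := cauchySeq_tendsto_of_complete hcauchy
  rw [Metric.tendsto_atTop] at hκ
  have hκ1 : 1 ≤ κ := by
    by_contra hcon
    push_neg at hcon
    obtain ⟨N, hN⟩ := hκ ((1 - κ) / 2) (by linarith)
    have h1 := hN N le_rfl
    rw [Real.dist_eq] at h1
    have h2 := (abs_lt.mp h1).2
    have h3 := hb N
    linarith
  have hcv : ∀ x : ℝ, κ < x → ∃ N, ∀ n m, N ≤ n → N ≤ m → cval (y n) (y m) < x := by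
    intro x hx
    have hδ0 : 0 < (x - κ) / 4 := by linarith
    obtain ⟨N1, hN1⟩ := hC ((x - κ) / 4) hδ0
    obtain ⟨N2, hN2⟩ := hκ ((x - κ) / 4) hδ0
    refine ⟨max N1 N2, fun n m hn hm => ?_⟩
    have h1 := hN1 n m (le_trans (le_max_left _ _) hn) (le_trans (le_max_left _ _) hm)
    have h2 := hN2 n (le_trans (le_max_right _ _) hn)
    have h3 := hN2 m (le_trans (le_max_right _ _) hm)
    rw [Real.dist_eq] at h2 h3
    have h2' := (abs_lt.mp h2).2
    have h3' := (abs_lt.mp h3).2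
    rw [cval_eq_rho]
    linarith
  set Pred : ℝ → ℕ → Prop := fun x N => ∀ n m, N ≤ n → N ≤ m → cval (y n) (y m) < x
    with hPreddef
  have predmono : ∀ {x x' : ℝ} {N : ℕ}, Pred x N → x ≤ x' → Pred x' N :=
    fun h hxx' n m hn hm => lt_of_lt_of_le (h n m hn hm) hxx'
  set Fs : ℝ → G := fun x => if hx : ∃ N, Pred x N then (y hx.choose).f x else 0 with hFsdef
  have hFagree : ∀ (x : ℝ) (N : ℕ), Pred x N → ∀ n, N ≤ n → (y n).f x = Fs x := by
    intro x N hP n hn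
    have hex : ∃ N, Pred x N := ⟨N, hP⟩
    have hP0 : Pred x hex.choose := hex.choose_spec
    have e1 : (y n).f x = (y (max N hex.choose)).f x :=
      agree_above _ _ (hP n (max N hex.choose) hn (le_max_left _ _))
    have e2 : (y (max N hex.choose)).f x = (y hex.choose).f x :=
      agree_above _ _ (hP0 (max N hex.choose) hex.choose (le_max_right _ _) le_rfl)
    rw [e1, e2, hFsdef]
    simp only
    rw [dif_pos hex]
  have hev : ∃ b : ℝ, ∀ t : ℝ, b ≤ t → (if κ < t then Fs t else 0) = 0 := by
    obtain ⟨N1, hP1⟩ := hcv (κ + 1) (by linarith)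
    obtain ⟨b1, hb1⟩ := (y N1).f_ev
    refine ⟨max b1 (κ + 1), fun t ht => ?_⟩
    have htκ : κ < t := lt_of_lt_of_le (lt_add_one κ) (le_trans (le_max_right _ _) ht)
    rw [if_pos htκ,
      ← hFagree t N1 (predmono hP1 (le_trans (le_max_right _ _) ht)) N1 le_rfl]
    exact hb1 t (le_trans (le_max_left _ _) ht)
  have hpcl : ∀ x : ℝ, κ < x → ∃ ε > 0, ∀ s ∈ Set.Icc (x - ε) x ∩ Set.Ioi κ,
      (if κ < s then Fs s else 0) = (if κ < x then Fs x else 0) := by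
    intro x hx
    obtain ⟨N2, hP2⟩ := hcv ((κ + x) / 2) (by linarith)
    obtain ⟨e, he, hg⟩ := lconst (y N2) x
    refine ⟨min e ((x - κ) / 4), lt_min he (by linarith), ?_⟩
    rintro s ⟨⟨hs1, hs2⟩, hs3⟩
    have hm1 := min_le_left e ((x - κ) / 4)
    have hm2 := min_le_right e ((x - κ) / 4)
    have hsx' : (κ + x) / 2 < s := by linarith
    have hxx' : (κ + x) / 2 < x := by linarith
    rw [if_pos (Set.mem_Ioi.mp hs3), if_pos hx,
      ← hFagree s N2 (predmono hP2 hsx'.le) N2 le_rfl,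
      ← hFagree x N2 (predmono hP2 hxx'.le) N2 le_rfl]
    exact hg s (by linarith) hs2
  set z : TreePt G :=
    ⟨κ, fun x => if κ < x then Fs x else 0, by linarith,
      fun t ht => if_neg (not_lt.mpr ht), hev, hpcl⟩ with hzdef
  have hza : z.a = κ := rfl
  have hzf : ∀ x : ℝ, κ < x → z.f x = Fs x := fun x hx => if_pos hx
  refine ⟨z, fun ε hε => ?_⟩
  obtain ⟨N3, hP3⟩ := hcv (κ + ε / 4) (by linarith)
  obtain ⟨N4, hN4⟩ := hκ (ε / 4) (by linarith)
  refine ⟨max N3 N4, fun n hn => ?_⟩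
  have hn3 : N3 ≤ n := le_trans (le_max_left _ _) hn
  have hn4 : N4 ≤ n := le_trans (le_max_right _ _) hn
  have hx0 : (κ + ε / 4) ∈ aset (y n) z := by
    intro t ht
    have htκ : κ < t := by linarith
    rw [hzf t htκ]
    exact hFagree t N3 (predmono hP3 (le_of_lt ht)) n hn3
  have hcb := cval_le (y n) z hx0
  have han := hN4 n hn4
  rw [Real.dist_eq] at han
  have han' := abs_lt.mp han
  have hcb2 : cval (y n) z ≤ κ + ε / 4 := by
    refine le_trans hcb (max_le (max_le (by linarith [han'.2]) ?_) le_rfl)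
    rw [hza]; linarith
  have h1 := left_le_cval (y n) z
  have h2 := right_le_cval (y n) z
  rw [hza] at h2
  unfold rho
  rw [hza]
  linarith [han'.1]

theorem part2 : ∃ p q : TreePt G, ∀ S : TreePt G → TreePt G, Function.Bijective S →
    (∀ u v : TreePt G, rho (S u) (S v) = rho u v) → S p ≠ q := by
  have h2pos : (0:ℝ) < 2 := by norm_num
  refine ⟨zeroPt 1 one_pos, zeroPt 2 h2pos, fun S hS hiso hSp => ?_⟩
  set t : ℕ → ℝ := fun n => 1 / (n + 1) with htdef
  have ht0 : ∀ n, 0 < t n := fun n => by positivity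
  have ht1 : ∀ n, t n ≤ 1 := by
    intro n
    rw [htdef]
    simp only
    rw [div_le_one (by positivity)]
    linarith [Nat.cast_nonneg (α := ℝ) n]
  have htmono : ∀ N n : ℕ, N ≤ n → t n ≤ t N := by
    intro N n h
    apply one_div_le_one_div_of_le (by positivity)
    have : (N:ℝ) ≤ n := Nat.cast_le.mpr h
    linarith
  set X : ℕ → TreePt G := fun n => zeroPt (t n) (ht0 n) with hXdef
  set Y : ℕ → TreePt G := fun n => S (X n) with hYdef
  have hρXX : ∀ n m, rho (X n) (X m) = |t n - t m| := fun n m => rho_zeroPt _ _ _ _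
  have hρpX : ∀ n, rho (zeroPt 1 one_pos : TreePt G) (X n) = 1 - t n := by
    intro n
    rw [hXdef]
    simp only
    rw [rho_zeroPt, abs_of_nonneg (by linarith [ht1 n])]
  have hbY : ∀ n, 1 ≤ (Y n).a := by
    intro n
    have h := hiso (zeroPt 1 one_pos) (X n)
    rw [hSp] at h
    have h2 := rho_lower_right (zeroPt 2 h2pos : TreePt G) (Y n)
    have hz2 : (zeroPt 2 h2pos : TreePt G).a = 2 := rfl
    rw [hz2] at h2
    rw [hρpX n] at h
    rw [hYdef] at h2 ⊢
    simp only at h2 ⊢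
    rw [h] at h2
    linarith [ht0 n]
  have hCY : ∀ ε : ℝ, 0 < ε → ∃ N, ∀ n m, N ≤ n → N ≤ m → rho (Y n) (Y m) < ε := by
    intro ε hε
    obtain ⟨N, hN⟩ := exists_nat_gt (1 / ε)
    refine ⟨N, fun n m hn hm => ?_⟩
    rw [hYdef]
    simp only
    rw [hiso (X n) (X m), hρXX]
    have hN1 : t N < ε := by
      rw [htdef]
      simp only
      rw [div_lt_iff₀ (by positivity)]
      rw [div_lt_iff₀ hε] at hN
      nlinarith
    have h1 := htmono N n hn
    have h2 := htmono N m hm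
    rw [abs_sub_lt_iff]
    constructor <;> linarith [ht0 n, ht0 m]
  obtain ⟨z, hz⟩ := cauchy_limit Y hCY hbY
  obtain ⟨w, hw⟩ := hS.2 z
  have hwa := w.a_pos
  obtain ⟨N5, hN5⟩ := hz (w.a / 2) (by linarith)
  obtain ⟨N6, hN6⟩ := exists_nat_gt (2 / w.a)
  set n := max N5 N6 with hndef
  have hρ1 : rho (Y n) z < w.a / 2 := hN5 n (le_max_left _ _)
  have hEq : rho (X n) w = rho (Y n) z := by
    rw [← hw, hYdef]
    simp only
    rw [hiso (X n) w]
  have h3 := rho_lower_left (X n) w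
  have hXa : (X n).a = t n := rfl
  rw [hXa] at h3
  have htn : t n < w.a / 2 := by
    have h4 := htmono N6 n (le_max_right _ _)
    have hN6' : t N6 < w.a / 2 := by
      rw [htdef]
      simp only
      rw [div_lt_iff₀ (by positivity)]
      rw [div_lt_iff₀ hwa] at hN6
      nlinarith
    linarith
  linarith

end Stmt17

/-- `X_G` is similarity homogeneous but not homogeneous: the similarity group acts
transitively, but the isometry group does not. -/


theorem stmt17 {G : Type*} [AddGroup G] [Nontrivial G] :
    (∀ p q : TreePt G, ∃ (k : ℝ) (S : TreePt G → TreePt G), 0 < k ∧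
      Function.Bijective S ∧ (∀ u v : TreePt G, rho (S u) (S v) = k * rho u v) ∧
      S p = q) ∧
    (∃ p q : TreePt G, ∀ S : TreePt G → TreePt G, Function.Bijective S →
      (∀ u v : TreePt G, rho (S u) (S v) = rho u v) → S p ≠ q) := by
  exact ⟨Stmt17.part1, Stmt17.part2⟩
end

section
/- Let G be a nontrivial additive group and let (X_G, ρ) be the metric space of pairs (a, f), a > 0, f : ℝ → G with f = 0 on (−∞, a], f eventually 0, f piecewise constant from the left on (a, ∞), with metric ρ(p,q) = (c(p,q) − a) + (c(p,q) − b) where c(p,q) = max(a, b, inf{x : f = g on (x, ∞)}). For a > 0 let F_a = {(a, f) ∈ X_G}. Then for all a, b > 0 the fibers F_a and F_b are isometric (there is a bijection T : F_a → F_b with ρ(T p, T q) = ρ(p, q) for all p, q ∈ F_a) and equidistant at distance |a − b|: for every p ∈ F_a there exists q ∈ F_b with ρ(p, q) = |a − b|, and ρ(p, q') ≥ |a − b| for every q' ∈ F_b. -/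
namespace AuxStmt18

variable {G : Type*} [AddGroup G]

lemma treept_ext {p q : TreePt G} (h1 : p.a = q.a) (h2 : p.f = q.f) : p = q := by
  cases p; cases q; simp_all

/-- Shift a point to the fiber over `b`. -/
noncomputable def shiftPt (p : TreePt G) (b : ℝ) (hb : 0 < b) : TreePt G where
  a := b
  f := fun t => p.f (t + p.a - b)
  a_pos := hb
  f_zero := fun t ht => p.f_zero _ (by linarith)
  f_ev := by
    obtain ⟨c, hc⟩ := p.f_ev
    exact ⟨c + b - p.a, fun t ht => hc _ (by linarith)⟩
  f_pcl := by
    intro x hx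
    obtain ⟨ε, hε, h⟩ := p.f_pcl (x + p.a - b) (by have := p.a_pos; linarith)
    refine ⟨ε, hε, fun s hs => ?_⟩
    obtain ⟨⟨h1, h2⟩, h3⟩ := hs
    simp only [Set.mem_Ioi] at h3
    exact h (s + p.a - b) ⟨⟨by linarith, by linarith⟩, by simp; linarith⟩

lemma shift_shift (p : TreePt G) (b : ℝ) (hb : 0 < b) :
    shiftPt (shiftPt p b hb) p.a p.a_pos = p := by
  refine treept_ext rfl ?_
  funext t
  show p.f (t + b - p.a + p.a - b) = p.f t
  congr 1; ring

/-- The agreement set. -/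
def Sset (p q : TreePt G) : Set ℝ := {x : ℝ | ∀ t : ℝ, x < t → p.f t = q.f t}

lemma Sset_nonempty (p q : TreePt G) : (Sset p q).Nonempty := by
  obtain ⟨c1, hc1⟩ := p.f_ev
  obtain ⟨c2, hc2⟩ := q.f_ev
  exact ⟨max c1 c2, fun t ht => by
    rw [hc1 t (le_of_lt (lt_of_le_of_lt (le_max_left _ _) ht)),
        hc2 t (le_of_lt (lt_of_le_of_lt (le_max_right _ _) ht))]⟩

lemma rho_shift (p q : TreePt G) (hpq : q.a = p.a) (b : ℝ) (hb : 0 < b) :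
    rho (shiftPt p b hb) (shiftPt q b hb) = rho p q := by
  have hshiftp : (shiftPt p b hb).f = fun t => p.f (t + p.a - b) := rfl
  have hshiftq : (shiftPt q b hb).f = fun t => q.f (t + p.a - b) := by
    funext t; show q.f (t + q.a - b) = _; rw [hpq]
  by_cases hf : p.f = q.f
  · -- the two points are equal up to f; both distances are 0
    have hS : Sset p q = Set.univ := by
      ext x; simp [Sset, hf]
    have hS' : Sset (shiftPt p b hb) (shiftPt q b hb) = Set.univ := by
      ext x; simp [Sset, hshiftp, hshiftq, hf]
    have hinf : sInf (Sset p q) = 0 := by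
      rw [hS]; exact Real.sInf_of_not_bddBelow not_bddBelow_univ
    have hinf' : sInf (Sset (shiftPt p b hb) (shiftPt q b hb)) = 0 := by
      rw [hS']; exact Real.sInf_of_not_bddBelow not_bddBelow_univ
    have hcv : cval p q = p.a := by
      show max (max p.a q.a) (sInf (Sset p q)) = p.a
      rw [hinf, hpq]
      have := p.a_pos
      simp [le_of_lt this]
    have hcv' : cval (shiftPt p b hb) (shiftPt q b hb) = b := by
      show max (max b b) (sInf (Sset (shiftPt p b hb) (shiftPt q b hb))) = b
      rw [hinf']
      simp [le_of_lt hb]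
    show (cval _ _ - b) + (cval _ _ - b) = (cval p q - p.a) + (cval p q - q.a)
    rw [hcv, hcv', hpq]; ring
  · obtain ⟨t₀, ht₀⟩ := Function.ne_iff.mp hf
    have ht₀a : p.a < t₀ := by
      by_contra h
      push_neg at h
      exact ht₀ (by rw [p.f_zero t₀ h, q.f_zero t₀ (by rw [hpq]; exact h)])
    set S := Sset p q with hSdef
    have hlb : ∀ x ∈ S, t₀ ≤ x := by
      intro x hx
      by_contra h
      push_neg at h
      exact ht₀ (hx t₀ h)
    have hbdd : BddBelow S := ⟨t₀, hlb⟩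
    have hne : S.Nonempty := Sset_nonempty p q
    have hinf_ge : p.a < sInf S := lt_of_lt_of_le ht₀a (le_csInf hne hlb)
    set S' := Sset (shiftPt p b hb) (shiftPt q b hb) with hS'def
    have hmem : ∀ x : ℝ, x ∈ S' ↔ x + p.a - b ∈ S := by
      intro x
      constructor
      · intro hx t ht
        have this1 := hx (t + b - p.a) (by linarith)
        have e1 : (shiftPt p b hb).f (t + b - p.a) = p.f t := by
          show p.f (t + b - p.a + p.a - b) = p.f t; congr 1; ring
        have e2 : (shiftPt q b hb).f (t + b - p.a) = q.f t := by
          show q.f (t + b - p.a + q.a - b) = q.f t; rw [hpq]; congr 1; ring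
        rw [e1, e2] at this1
        exact this1
      · intro hx t ht
        show p.f (t + p.a - b) = q.f (t + q.a - b)
        rw [hpq]
        exact hx (t + p.a - b) (by linarith)
    have hglb : IsGLB S' (sInf S + (b - p.a)) := by
      constructor
      · intro x hx
        have : x + p.a - b ∈ S := (hmem x).mp hx
        have := csInf_le hbdd this
        linarith
      · intro w hw
        have : w - (b - p.a) ≤ sInf S := by
          apply le_csInf hne
          intro x hx
          have hx' : x + (b - p.a) ∈ S' := (hmem _).mpr (by
            have e : x + (b - p.a) + p.a - b = x := by ring
            rw [e]; exact hx)
          have := hw hx'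
          linarith
        linarith
    have hne' : S'.Nonempty := Sset_nonempty _ _
    have hinf' : sInf S' = sInf S + (b - p.a) := hglb.csInf_eq hne'
    have hcv : cval p q = sInf S := by
      show max (max p.a q.a) (sInf S) = sInf S
      rw [hpq]
      rw [max_self]
      exact max_eq_right (le_of_lt hinf_ge)
    have hcv' : cval (shiftPt p b hb) (shiftPt q b hb) = sInf S' := by
      show max (max b b) (sInf S') = sInf S'
      rw [max_self]
      apply max_eq_right
      rw [hinf']; linarith
    show (cval _ _ - b) + (cval _ _ - b) = (cval p q - p.a) + (cval p q - q.a)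
    rw [hcv, hcv', hinf', hpq]; ring

/-- The nearest point to `p` in the fiber over `b`. -/
noncomputable def nearPt (p : TreePt G) (b : ℝ) (hb : 0 < b) : TreePt G where
  a := b
  f := fun t => if t ≤ max p.a b then 0 else p.f t
  a_pos := hb
  f_zero := fun t ht => if_pos (le_trans ht (le_max_right _ _))
  f_ev := by
    obtain ⟨c, hc⟩ := p.f_ev
    refine ⟨c, fun t ht => ?_⟩
    by_cases h : t ≤ max p.a b
    · simp [h]
    · simp [h, hc t ht]
  f_pcl := by
    intro x hx
    by_cases hxm : x ≤ max p.a b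
    · refine ⟨1, one_pos, fun s hs => ?_⟩
      obtain ⟨⟨h1, h2⟩, h3⟩ := hs
      simp [le_trans h2 hxm, hxm]
    · push_neg at hxm
      obtain ⟨ε, hε, h⟩ := p.f_pcl x (lt_of_le_of_lt (le_max_left _ _) hxm)
      refine ⟨min ε ((x - max p.a b) / 2), lt_min hε (by linarith), fun s hs => ?_⟩
      obtain ⟨⟨h1, h2⟩, h3⟩ := hs
      have hε1 : min ε ((x - max p.a b) / 2) ≤ ε := min_le_left _ _
      have hε2 : min ε ((x - max p.a b) / 2) ≤ (x - max p.a b) / 2 := min_le_right _ _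
      have hs_gt : max p.a b < s := by linarith
      have hspa : p.a < s := lt_of_le_of_lt (le_max_left _ _) hs_gt
      show (if s ≤ max p.a b then (0:G) else p.f s) = (if x ≤ max p.a b then (0:G) else p.f x)
      rw [if_neg (not_le.mpr hs_gt), if_neg (not_le.mpr hxm)]
      exact h s ⟨⟨by linarith, h2⟩, hspa⟩

lemma rho_nearPt (p : TreePt G) (b : ℝ) (hb : 0 < b) :
    rho p (nearPt p b hb) = |p.a - b| := by
  have hmem : max p.a b ∈ Sset p (nearPt p b hb) := by
    intro t ht
    show p.f t = if t ≤ max p.a b then 0 else p.f t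
    rw [if_neg (not_le.mpr ht)]
  have hinf : sInf (Sset p (nearPt p b hb)) ≤ max p.a b := by
    by_cases hbd : BddBelow (Sset p (nearPt p b hb))
    · exact csInf_le hbd hmem
    · rw [Real.sInf_of_not_bddBelow hbd]
      have := p.a_pos
      have := le_max_left p.a b
      linarith
  have hcv : cval p (nearPt p b hb) = max p.a b := by
    show max (max p.a b) (sInf (Sset p (nearPt p b hb))) = max p.a b
    exact max_eq_left hinf
  show (cval _ _ - p.a) + (cval _ _ - b) = _
  rw [hcv]
  rcases le_total p.a b with h | h
  · rw [max_eq_right h, abs_of_nonpos (by linarith)]; ring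
  · rw [max_eq_left h, abs_of_nonneg (by linarith)]; ring

end AuxStmt18

/-- The fibers `F_a = {(a, f)}` of `X_G` are mutually isometric and equidistant:
`F_a` and `F_b` are isometric, and every point of `F_a` realizes the distance
`|a - b|` to `F_b`, which is a lower bound for all distances between the fibers. -/
theorem stmt18 {G : Type*} [AddGroup G] [Nontrivial G]
    (a b : ℝ) (ha : 0 < a) (hb : 0 < b) :
    (∃ T : {p : TreePt G // p.a = a} → {p : TreePt G // p.a = b},
      Function.Bijective T ∧
      ∀ p q : {p : TreePt G // p.a = a}, rho (T p).1 (T q).1 = rho p.1 q.1) ∧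
    (∀ p : TreePt G, p.a = a →
      (∃ q : TreePt G, q.a = b ∧ rho p q = |a - b|) ∧
      ∀ q' : TreePt G, q'.a = b → |a - b| ≤ rho p q') := by
  open AuxStmt18 in
  constructor
  · refine ⟨fun p => ⟨shiftPt p.1 b hb, rfl⟩, ⟨?_, ?_⟩, ?_⟩
    · -- injective
      intro p q h
      have hval : shiftPt p.1 b hb = shiftPt q.1 b hb := congrArg Subtype.val h
      apply Subtype.ext
      calc p.1 = shiftPt (shiftPt p.1 b hb) p.1.a p.1.a_pos := (shift_shift p.1 b hb).symm
        _ = shiftPt (shiftPt q.1 b hb) q.1.a q.1.a_pos := by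
            rw [hval]
            congr 1
            rw [p.2, q.2]
        _ = q.1 := shift_shift q.1 b hb
    · -- surjective
      intro q
      have h2 : q.1.a = b := q.2
      refine ⟨⟨shiftPt q.1 a ha, rfl⟩, Subtype.ext ?_⟩
      show shiftPt (shiftPt q.1 a ha) b hb = q.1
      refine treept_ext h2.symm ?_
      funext t
      show q.1.f (t + a - b + q.1.a - a) = q.1.f t
      rw [h2]; congr 1; ring
    · intro p q
      exact rho_shift p.1 q.1 (by rw [p.2, q.2]) b hb
  · intro p hpa
    constructor
    · exact ⟨nearPt p b hb, rfl, by rw [rho_nearPt, hpa]⟩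
    · intro q' hq'
      have hc : max a b ≤ cval p q' := by
        show max a b ≤ max (max p.a q'.a) _
        rw [hpa, hq']
        exact le_max_left _ _
      have h1 : a ≤ cval p q' := le_trans (le_max_left a b) hc
      have h2 : b ≤ cval p q' := le_trans (le_max_right a b) hc
      show |a - b| ≤ (cval p q' - p.a) + (cval p q' - q'.a)
      rw [hpa, hq', abs_sub_le_iff]
      constructor <;> linarith
end

section
/- There exists a metric space (X, ρ) with the following properties: (i) X is geodesic (every two points are joined by an isometric map of a closed real interval of length equal to their distance); (ii) X is locally complete (every point has some r > 0 such that the closed ball of radius r around it is a complete subset); (iii) X is similarity homogeneous (for all p, q ∈ X there exist λ > 0 and a bijection S : X → X with ρ(S u, S v) = λ · ρ(u, v) for all u, v, and S p = q); (iv) X is not homogeneous (there exist p, q ∈ X such that no distance-preserving bijection of X maps p to q); and (v) X is not locally compact. -/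
open Metric

noncomputable section

namespace Stmt19Aux

abbrev E : Type := BoundedContinuousFunction ℕ ℝ
abbrev V : Type := ℝ × E
abbrev X : Type := {x : V // 0 < x.1}

lemma abs_fst_le (x y : V) : |x.1 - y.1| ≤ dist x y := by
  rw [Prod.dist_eq, Real.dist_eq]
  exact le_max_left _ _

/-- completeness of small closed balls in the half space -/
lemma isComplete_ball (p : X) (r : ℝ) (hr : r < p.val.1) :
    IsComplete (Metric.closedBall p r) := by
  rw [Subtype.isComplete_iff]
  have himg : (Subtype.val '' Metric.closedBall p r) = Metric.closedBall p.val r := by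
    ext x
    constructor
    · rintro ⟨y, hy, rfl⟩
      simpa [Metric.mem_closedBall, Subtype.dist_eq] using hy
    · intro hx
      rw [Metric.mem_closedBall] at hx
      have hx1 : 0 < x.1 := by
        have h1 : |x.1 - p.val.1| ≤ r := le_trans (abs_fst_le _ _) hx
        have h2 := abs_le.1 h1
        linarith [h2.1]
      exact ⟨⟨x, hx1⟩, by simpa [Metric.mem_closedBall, Subtype.dist_eq] using hx, rfl⟩
  rw [himg]
  exact Metric.isClosed_closedBall.isComplete

/-- positivity along a segment -/
lemma seg_pos (a b : V) (ha : 0 < a.1) (hb : 0 < b.1) (s : ℝ) (hs0 : 0 ≤ s) (hs1 : s ≤ 1) :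
    0 < (a + s • (b - a)).1 := by
  have h : (a + s • (b - a)).1 = a.1 + s * (b.1 - a.1) := rfl
  rw [h]
  rcases le_total a.1 b.1 with h'|h' <;> nlinarith

def delta (n : ℕ) : E :=
  ⟨⟨fun m => if m = n then 1 else 0, continuous_of_discreteTopology⟩, 1, by
    intro x y
    simp only [ContinuousMap.coe_mk, Real.dist_eq]
    split_ifs <;> norm_num⟩

lemma delta_apply (n m : ℕ) : delta n m = if m = n then 1 else 0 := rfl

lemma norm_delta_le (n : ℕ) : ‖delta n‖ ≤ 1 := by
  rw [BoundedContinuousFunction.norm_le zero_le_one]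
  intro m
  rw [delta_apply]
  split_ifs <;> norm_num

lemma one_le_norm_delta_sub (n m : ℕ) (h : n ≠ m) : 1 ≤ ‖delta n - delta m‖ := by
  have h1 : |(delta n - delta m) n| ≤ ‖delta n - delta m‖ :=
    (delta n - delta m).norm_coe_le_norm n
  have h2 : (delta n - delta m) n = 1 := by
    simp [delta_apply, h]
  rw [h2] at h1
  simpa using h1

/-- the ball of radius 3/2 around a point at height 1 is not complete -/
lemma not_isComplete_ball (q : X) (hq : q.val.1 = 1) :
    ¬ IsComplete (Metric.closedBall q (3/2)) := by
  intro hcomp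
  set w : V := ((1 : ℝ), (0 : E)) with hw
  set c : ℕ → ℝ := fun n => 1 - (1:ℝ)/(n+1) with hc
  have hc0 : ∀ n, 0 ≤ c n ∧ c n ≤ 1 := by
    intro n
    have h1 : (0:ℝ) < 1/((n:ℝ)+1) := by positivity
    have h2 : (1:ℝ)/((n:ℝ)+1) ≤ 1 := by
      rw [div_le_one (by positivity)]
      linarith [Nat.cast_nonneg (α := ℝ) n]
    constructor
    · show (0:ℝ) ≤ 1 - 1/((n:ℝ)+1); linarith
    · show 1 - 1/((n:ℝ)+1) ≤ (1:ℝ); linarith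
  set u : ℕ → X := fun n => ⟨q.val - c n • w, by
    have h : (q.val - c n • w).1 = q.val.1 - c n * 1 := rfl
    rw [h, hq, mul_one]
    have h1 : (0:ℝ) < 1/((n:ℝ)+1) := by positivity
    have : c n = 1 - 1/((n:ℝ)+1) := rfl
    rw [this]
    linarith⟩ with hu
  have hval : ∀ n, (u n).val = q.val - c n • w := fun n => rfl
  have htendc : Filter.Tendsto c Filter.atTop (nhds 1) := by
    have h0 : Filter.Tendsto (fun n : ℕ => 1/((n:ℝ)+1)) Filter.atTop (nhds 0) :=
      tendsto_one_div_add_atTop_nhds_zero_nat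
    have h1 := Filter.Tendsto.const_sub (1:ℝ) h0
    have h2 : c = fun k : ℕ => 1 - (1:ℝ)/((k:ℝ)+1) := rfl
    rw [h2]
    simpa [one_div] using h1
  have htend : Filter.Tendsto (fun n => (u n).val) Filter.atTop (nhds (q.val - w)) := by
    have h2 : Filter.Tendsto (fun n : ℕ => c n • w) Filter.atTop (nhds ((1:ℝ) • w)) :=
      htendc.smul_const w
    rw [one_smul] at h2
    exact Filter.Tendsto.const_sub q.val h2
  have hcauchyV : CauchySeq (fun n => (u n).val) := htend.cauchySeq
  have hcauchy : CauchySeq u := by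
    rw [Metric.cauchySeq_iff] at hcauchyV ⊢
    simpa [Subtype.dist_eq] using hcauchyV
  have hnw : ‖w‖ = 1 := by
    rw [hw, Prod.norm_def]
    simp
  have hmem : ∀ n, u n ∈ Metric.closedBall q (3/2) := by
    intro n
    rw [Metric.mem_closedBall, Subtype.dist_eq, hval, dist_eq_norm]
    have h3 : q.val - c n • w - q.val = -(c n • w) := by abel
    rw [h3, norm_neg, norm_smul (c n) w, hnw, mul_one, Real.norm_eq_abs,
      abs_of_nonneg (hc0 n).1]
    exact (hc0 n).2.trans (by norm_num)
  obtain ⟨L, hL, hconv⟩ := cauchySeq_tendsto_of_isComplete hcomp hmem hcauchy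
  have hconvV : Filter.Tendsto (fun n => (u n).val) Filter.atTop (nhds L.val) :=
    (continuous_subtype_val.tendsto L).comp hconv
  have hEq : L.val = q.val - w := tendsto_nhds_unique hconvV htend
  have : L.val.1 = 0 := by rw [hEq]; show q.val.1 - (1:ℝ) = 0; rw [hq]; ring
  linarith [L.prop]

end Stmt19Aux

set_option maxHeartbeats 1000000 in
set_option synthInstance.maxHeartbeats 1000000 in
open Stmt19Aux in
/-- There exists a geodesic, locally complete, similarity homogeneous,
non-homogeneous metric space which is not locally compact. This shows that local
compactness is essential in Berestovskii's conjecture. -/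
theorem stmt19 :
    ∃ (X : Type) (_ : MetricSpace X),
      (∀ p q : X, ∃ γ : ℝ → X, γ 0 = p ∧ γ (dist p q) = q ∧
        ∀ s ∈ Set.Icc (0:ℝ) (dist p q), ∀ t ∈ Set.Icc (0:ℝ) (dist p q),
          dist (γ s) (γ t) = |s - t|) ∧
      (∀ p : X, ∃ r : ℝ, 0 < r ∧ IsComplete (Metric.closedBall p r)) ∧
      (∀ p q : X, ∃ (k : ℝ) (S : X → X), 0 < k ∧ Function.Bijective S ∧
        (∀ u v : X, dist (S u) (S v) = k * dist u v) ∧ S p = q) ∧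
      (∃ p q : X, ∀ S : X → X, Function.Bijective S →
        (∀ u v : X, dist (S u) (S v) = dist u v) → S p ≠ q) ∧
      ¬ LocallyCompactSpace X := by
  refine ⟨Stmt19Aux.X, inferInstance, ?_, ?_, ?_, ?_, ?_⟩
  -- geodesic
  · intro p q
    obtain ⟨d, hd⟩ : ∃ d, dist p q = d := ⟨_, rfl⟩
    have hd0 : 0 ≤ d := hd ▸ dist_nonneg
    have hdv : d = dist p.val q.val := hd ▸ rfl
    set pr : ℝ → ℝ := fun t => max 0 (min t d) with hpr
    have hpr0 : ∀ t, 0 ≤ pr t := fun t => le_max_left _ _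
    have hprd : ∀ t, pr t ≤ d := fun t => max_le hd0 (min_le_right _ _)
    have hsdiv : ∀ t, 0 ≤ pr t / d ∧ pr t / d ≤ 1 := by
      intro t
      rcases eq_or_lt_of_le hd0 with h|h
      · have h1 : pr t = 0 := le_antisymm ((hprd t).trans h.symm.le) (hpr0 t)
        rw [h1, zero_div]
        norm_num
      · exact ⟨div_nonneg (hpr0 t) hd0, (div_le_one h).2 (hprd t)⟩
    have pos : ∀ t, 0 < (p.val + (pr t / d) • (q.val - p.val)).1 := fun t =>
      seg_pos p.val q.val p.prop q.prop _ (hsdiv t).1 (hsdiv t).2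
    rw [hd]
    refine ⟨fun t => ⟨p.val + (pr t / d) • (q.val - p.val), pos t⟩, ?_, ?_, ?_⟩
    · have h0 : pr 0 = 0 := by
        rw [hpr]
        simp [min_eq_left hd0]
      apply Subtype.ext
      show p.val + (pr 0 / d) • (q.val - p.val) = p.val
      rw [h0, zero_div, zero_smul, add_zero]
    · have hdd : pr d = d := by
        rw [hpr]
        simp [hd0]
      apply Subtype.ext
      show p.val + (pr d / d) • (q.val - p.val) = q.val
      rcases eq_or_lt_of_le hd0 with h|h
      · have hpq : p = q := by
          apply eq_of_dist_eq_zero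
          rw [hd, ← h]
        rw [hpq]
        simp
      · rw [hdd, div_self h.ne', one_smul]
        abel
    · intro s hs t ht
      have hprs : pr s = s := by
        rw [hpr]; simp [min_eq_left hs.2, max_eq_right hs.1]
      have hprt : pr t = t := by
        rw [hpr]; simp [min_eq_left ht.2, max_eq_right ht.1]
      rcases eq_or_lt_of_le hd0 with h|h
      · have hs0 : s = 0 := le_antisymm (hs.2.trans h.symm.le) hs.1
        have ht0 : t = 0 := le_antisymm (ht.2.trans h.symm.le) ht.1
        rw [hs0, ht0]
        simp
      · rw [Subtype.dist_eq]
        show dist (p.val + (pr s / d) • (q.val - p.val)) (p.val + (pr t / d) • (q.val - p.val)) = |s - t|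
        rw [hprs, hprt, dist_eq_norm]
        have h1 : (p.val + (s / d) • (q.val - p.val)) - (p.val + (t / d) • (q.val - p.val))
            = ((s - t)/d) • (q.val - p.val) := by
          rw [add_sub_add_left_eq_sub, ← sub_smul (s/d) (t/d) (q.val - p.val), div_sub_div_same]
        rw [h1, norm_smul ((s-t)/d) (q.val - p.val), Real.norm_eq_abs, abs_div, abs_of_pos h]
        have h2 : ‖q.val - p.val‖ = d := by
          rw [← dist_eq_norm, hdv, dist_comm]
        rw [h2, div_mul_cancel₀ _ h.ne']
  -- locally complete
  · intro p
    refine ⟨p.val.1 / 2, half_pos p.prop, isComplete_ball p _ (by linarith [p.prop])⟩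
  -- similarity homogeneous
  · intro p q
    have hp1 := p.prop
    have hq1 := q.prop
    set k : ℝ := q.val.1 / p.val.1 with hkdef
    have hk : 0 < k := div_pos hq1 hp1
    have hkp : k * p.val.1 = q.val.1 := div_mul_cancel₀ _ hp1.ne'
    have h3 : k⁻¹ * q.val.1 = p.val.1 := by
      rw [← hkp, ← mul_assoc, inv_mul_cancel₀ hk.ne', one_mul]
    have posS : ∀ x : X, 0 < (q.val + k • (x.val - p.val)).1 := by
      intro x
      have h : (q.val + k • (x.val - p.val)).1 = q.val.1 + k * (x.val.1 - p.val.1) := rfl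
      rw [h]
      have h2 : q.val.1 + k * (x.val.1 - p.val.1) = k * x.val.1 := by
        rw [← hkp]; ring
      rw [h2]; exact mul_pos hk x.prop
    have posT : ∀ x : X, 0 < (p.val + k⁻¹ • (x.val - q.val)).1 := by
      intro x
      have h : (p.val + k⁻¹ • (x.val - q.val)).1 = p.val.1 + k⁻¹ * (x.val.1 - q.val.1) := rfl
      rw [h]
      have h2 : p.val.1 + k⁻¹ * (x.val.1 - q.val.1) = k⁻¹ * x.val.1 := by
        rw [← h3]; ring
      rw [h2]; exact mul_pos (inv_pos.2 hk) x.prop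
    refine ⟨k, fun x => ⟨q.val + k • (x.val - p.val), posS x⟩, hk, ?_, ?_, ?_⟩
    · refine Function.bijective_iff_has_inverse.2
        ⟨fun x => ⟨p.val + k⁻¹ • (x.val - q.val), posT x⟩, ?_, ?_⟩
      · intro x
        apply Subtype.ext
        show p.val + k⁻¹ • (q.val + k • (x.val - p.val) - q.val) = x.val
        rw [add_sub_cancel_left, smul_smul, inv_mul_cancel₀ hk.ne', one_smul]
        abel
      · intro x
        apply Subtype.ext
        show q.val + k • (p.val + k⁻¹ • (x.val - q.val) - p.val) = x.val
        rw [add_sub_cancel_left, smul_smul, mul_inv_cancel₀ hk.ne', one_smul]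
        abel
    · intro u v
      rw [Subtype.dist_eq, Subtype.dist_eq, dist_eq_norm, dist_eq_norm]
      show ‖q.val + k • (u.val - p.val) - (q.val + k • (v.val - p.val))‖ = k * ‖u.val - v.val‖
      have h : q.val + k • (u.val - p.val) - (q.val + k • (v.val - p.val)) = k • (u.val - v.val) := by
        rw [add_sub_add_left_eq_sub, ← smul_sub k (u.val - p.val) (v.val - p.val),
          sub_sub_sub_cancel_right]
      rw [h, norm_smul k (u.val - v.val), Real.norm_eq_abs, abs_of_pos hk]
    · apply Subtype.ext
      show q.val + k • (p.val - p.val) = q.val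
      simp
  -- not homogeneous
  · refine ⟨⟨((2:ℝ), (0:E)), by norm_num⟩, ⟨((1:ℝ), (0:E)), by norm_num⟩, ?_⟩
    set P : Stmt19Aux.X := ⟨((2:ℝ), (0:E)), by norm_num⟩
    set Q : Stmt19Aux.X := ⟨((1:ℝ), (0:E)), by norm_num⟩
    intro S hbij hiso hSp
    have hIso : Isometry S := Isometry.of_dist_eq hiso
    have himg : S '' Metric.closedBall P (3/2) = Metric.closedBall Q (3/2) := by
      ext y
      constructor
      · rintro ⟨x, hx, rfl⟩
        rw [Metric.mem_closedBall] at *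
        rw [← hSp, hiso]
        exact hx
      · intro hy
        obtain ⟨x, rfl⟩ := hbij.2 y
        refine ⟨x, ?_, rfl⟩
        rw [Metric.mem_closedBall] at *
        rw [← hiso x P, hSp]
        exact hy
    have h1 : IsComplete (Metric.closedBall P (3/2)) := by
      apply isComplete_ball P
      show (3/2 : ℝ) < 2
      norm_num
    have h2 : IsComplete (Metric.closedBall Q (3/2)) := by
      rw [← himg]
      exact (hIso.isUniformEmbedding.isComplete_iff).2 h1
    exact not_isComplete_ball Q rfl h2
  -- not locally compact
  · intro h
    set P : Stmt19Aux.X := ⟨((1:ℝ), (0:E)), by norm_num⟩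
    obtain ⟨s, hs_nhds, -, hs_comp⟩ := h.local_compact_nhds P Set.univ Filter.univ_mem
    obtain ⟨ε, hε, hball⟩ := Metric.mem_nhds_iff.1 hs_nhds
    have posu : ∀ n : ℕ, 0 < (P.val + (ε/2) • (((0:ℝ), delta n) : V)).1 := by
      intro n
      have heq : (P.val + (ε/2) • (((0:ℝ), delta n) : V)).1 = 1 + (ε/2) * 0 := rfl
      rw [heq]
      norm_num
    set u : ℕ → Stmt19Aux.X := fun n => ⟨P.val + (ε/2) • (((0:ℝ), delta n) : V), posu n⟩ with hu
    have hdist : ∀ n m : ℕ, dist (u n) (u m) = (ε/2) * ‖delta n - delta m‖ := by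
      intro n m
      rw [Subtype.dist_eq]
      show dist (P.val + (ε/2) • (((0:ℝ), delta n) : V)) (P.val + (ε/2) • (((0:ℝ), delta m) : V))
        = (ε/2) * ‖delta n - delta m‖
      rw [dist_eq_norm]
      have h1 : (P.val + (ε/2) • (((0:ℝ), delta n) : V)) - (P.val + (ε/2) • (((0:ℝ), delta m) : V))
          = (ε/2) • ((((0:ℝ), delta n) : V) - (((0:ℝ), delta m) : V)) := by
        rw [add_sub_add_left_eq_sub,
          ← smul_sub (ε/2) ((((0:ℝ), delta n)) : V) ((((0:ℝ), delta m)) : V)]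
      have h2 : ((((0:ℝ), delta n) : V) - (((0:ℝ), delta m) : V)) = (((0:ℝ), delta n - delta m) : V) := by
        rw [Prod.mk_sub_mk, sub_zero]
      rw [h1, h2, norm_smul (ε/2) (((0:ℝ), delta n - delta m) : V), Real.norm_eq_abs,
        abs_of_pos (by positivity)]
      congr 1
      rw [Prod.norm_def]
      simp [max_eq_right (norm_nonneg _)]
    have hmem : ∀ n, u n ∈ s := by
      intro n
      apply hball
      rw [Metric.mem_ball, Subtype.dist_eq]
      show dist (P.val + (ε/2) • (((0:ℝ), delta n) : V)) P.val < ε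
      rw [dist_eq_norm, add_sub_cancel_left, norm_smul (ε/2) (((0:ℝ), delta n) : V),
        Real.norm_eq_abs, abs_of_pos (by positivity)]
      have h2 : ‖(((0:ℝ), delta n) : V)‖ ≤ 1 := by
        rw [Prod.norm_def]
        simp [max_eq_right (norm_nonneg _)]
        exact norm_delta_le n
      nlinarith
    obtain ⟨L, -, φ, hφ, hconv⟩ := hs_comp.tendsto_subseq hmem
    have hC : CauchySeq (u ∘ φ) := hconv.cauchySeq
    obtain ⟨N, hN⟩ := Metric.cauchySeq_iff.1 hC (ε/4) (by positivity)
    have hdlt := hN (N+1) (by omega) N (by omega)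
    have hne : φ (N+1) ≠ φ N := (hφ (Nat.lt_succ_self N)).ne'
    have hge : ε/2 ≤ dist ((u ∘ φ) (N+1)) ((u ∘ φ) N) := by
      show ε/2 ≤ dist (u (φ (N+1))) (u (φ N))
      rw [hdist]
      have hnorm := one_le_norm_delta_sub _ _ hne
      nlinarith
    simp only [Function.comp] at hdlt hge
    linarith
end
end
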